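/- Let f, g : (X, p̄) → (Y, q̄) be stratified maps between stratified perverse spaces that are homotopic through a stratified homotopy φ : (X × [0,1], p̄) → (Y, q̄) satisfying φ*Dq̄ ≤ Dp̄. Then f and g induce the same homomorphism f_* = g_* : H_*^{p̄}(X;G) → H_*^{q̄}(Y;G) on intersection homology. -/

import Mathlib

noncomputable section
open Set

universe u v w


/-- A filtered space of formal dimension `dim` : closed subspaces
`∅ = X_{-1} ⊆ X_0 ⊆ … ⊆ X_n = X` with `X_n \ X_{n-1} ≠ ∅`. -/
structure FilteredSpace (X : Type u) [TopologicalSpace X] : Type u where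
  dim : ℕ
  filt : ℤ → Set X
  filt_neg : ∀ i : ℤ, i < 0 → filt i = ∅
  filt_mono : Monotone filt
  filt_closed : ∀ i, IsClosed (filt i)
  filt_top : ∀ i : ℤ, (dim : ℤ) ≤ i → filt i = Set.univ
  reg_nonempty : (filt dim \ filt ((dim : ℤ) - 1)).Nonempty

namespace FilteredSpace

variable {X : Type u} {Y : Type v} [TopologicalSpace X] [TopologicalSpace Y]

/-- `S` is a stratum of formal dimension `i` : a connected component of `X_i \ X_{i-1}`. -/
def IsStratumDim (F : FilteredSpace X) (S : Set X) (i : ℤ) : Prop :=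
  ∃ x ∈ F.filt i \ F.filt (i-1), S = connectedComponentIn (F.filt i \ F.filt (i-1)) x

/-- `S` is a stratum of the filtered space. -/
def IsStratum (F : FilteredSpace X) (S : Set X) : Prop := ∃ i, F.IsStratumDim S i

open Classical in
/-- The formal dimension of a stratum. -/
def stratumDim (F : FilteredSpace X) (S : Set X) : ℤ :=
  if h : ∃ i, F.IsStratumDim S i then h.choose else 0

/-- The codimension of a stratum : `dim X - dim S`. -/
def codim (F : FilteredSpace X) (S : Set X) : ℤ := (F.dim : ℤ) - F.stratumDim S

/-- A regular stratum : one contained in `X_n \ X_{n-1}`. -/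
def IsRegularStratum (F : FilteredSpace X) (S : Set X) : Prop :=
  F.IsStratumDim S (F.dim : ℤ)

/-- A singular stratum. -/
def IsSingularStratum (F : FilteredSpace X) (S : Set X) : Prop :=
  F.IsStratum S ∧ ¬ F.IsRegularStratum S

/-- The singular set `Σ = X_{n-1}`. -/
def sing (F : FilteredSpace X) : Set X := F.filt ((F.dim : ℤ) - 1)

/-- A perversity on a filtered space : a function on strata (here, defined on all
subsets) vanishing on regular strata. -/
def IsPerversity (F : FilteredSpace X) (p : Set X → ℤ) : Prop :=
  ∀ S, F.IsRegularStratum S → p S = 0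

/-- The top perversity `t̄ (S) = codim S - 2`. -/
def topPerv (F : FilteredSpace X) : Set X → ℤ := fun S => F.codim S - 2

open Classical in
/-- The dual perversity `D p̄ = t̄ - p̄` (vanishing on regular strata). -/
def dualPerv (F : FilteredSpace X) (p : Set X → ℤ) : Set X → ℤ :=
  fun S => if F.IsRegularStratum S then 0 else F.codim S - 2 - p S

/-- A stratified map between filtered spaces: each stratum of the source is sent into
a stratum of the target of smaller or equal codimension. -/
def IsStratifiedMap (F : FilteredSpace X) (F' : FilteredSpace Y) (f : X → Y) : Prop :=
  Continuous f ∧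
    ∀ S, F.IsStratum S → ∃ T, F'.IsStratum T ∧ f '' S ⊆ T ∧ F'.codim T ≤ F.codim S

end FilteredSpace

/-! ## Topological simplices, filtered simplices -/

/-- The standard topological `m`-simplex. -/
abbrev TSimp (m : ℕ) : Set (Fin (m+1) → ℝ) := stdSimplex ℝ (Fin (m+1))

/-- The number of nonzero barycentric coordinates of a point of the `m`-simplex;
`t` belongs to the `d`-skeleton iff `suppCard t ≤ d + 1`. -/
def suppCard {m : ℕ} (t : TSimp m) : ℕ :=
  @Finset.card _ (@Finset.filter _ (fun j => (t : Fin (m+1) → ℝ) j ≠ 0)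
    (Classical.decPred _) Finset.univ)

/-- The `j`-th face embedding of standard simplices. -/
def faceMap (m : ℕ) (j : Fin (m+2)) : C(TSimp m, TSimp (m+1)) where
  toFun t := ⟨Fin.insertNth j 0 t.1, by
    refine ⟨fun k => ?_, ?_⟩
    · refine Fin.succAboveCases j ?_ ?_ k
      · rw [Fin.insertNth_apply_same]
      · intro l; rw [Fin.insertNth_apply_succAbove]; exact t.2.1 l
    · rw [Fin.sum_univ_succAbove _ j, Fin.insertNth_apply_same]
      simp only [Fin.insertNth_apply_succAbove]
      rw [zero_add]; exact t.2.2⟩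
  continuous_toFun := by
    apply Continuous.subtype_mk
    exact continuous_const.finInsertNth j continuous_subtype_val

/-- The `j`-th vertex of the standard `m`-simplex. -/
def vert (m : ℕ) (j : Fin (m+1)) : TSimp m :=
  ⟨fun i => if i = j then 1 else 0, by
    refine ⟨fun k => ?_, ?_⟩
    · dsimp only; split <;> norm_num
    · classical
      simp [Finset.sum_ite_eq']⟩


/-! ## Generic homology of constraint systems on chain groups -/

section generic

variable {C : ℕ → Type w} [∀ m, AddCommGroup (C m)]
variable {D : ℕ → Type v} [∀ m, AddCommGroup (D m)]

/-- Relative cycles: chains of `A` whose boundary lies in `B`. -/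
def relCycles (d : ∀ m, C m →+ C (m-1)) (A B : ∀ m, AddSubgroup (C m)) (m : ℕ) :
    AddSubgroup (C m) :=
  A m ⊓ (B (m-1)).comap (d m)

/-- Relative boundaries: boundaries of chains of `A`, together with chains of `B`. -/
def relBnds (d : ∀ m, C m →+ C (m-1)) (A B : ∀ m, AddSubgroup (C m)) (m : ℕ) :
    AddSubgroup (C m) :=
  (A (m+1)).map (d (m+1)) ⊔ B m

/-- Relative homology of the pair of constraint systems `(A, B)`. -/
abbrev relHomology (d : ∀ m, C m →+ C (m-1)) (A B : ∀ m, AddSubgroup (C m)) (m : ℕ) :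
    Type w :=
  relCycles d A B m ⧸
    ((relBnds d A B m ⊓ relCycles d A B m).addSubgroupOf (relCycles d A B m))

/-- The homology class of a relative cycle. -/
def hcl (d : ∀ m, C m →+ C (m-1)) (A B : ∀ m, AddSubgroup (C m)) {m : ℕ}
    (ξ : C m) (h : ξ ∈ relCycles d A B m) : relHomology d A B m :=
  QuotientAddGroup.mk (⟨ξ, h⟩ : relCycles d A B m)

/-- `f` induces an isomorphism in homology, compatibly with classes of cycles. -/
def InducesIso (d : ∀ m, C m →+ C (m-1)) (A B : ∀ m, AddSubgroup (C m))
    (d' : ∀ m, D m →+ D (m-1)) (A' B' : ∀ m, AddSubgroup (D m)) (m : ℕ)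
    (f : C m →+ D m) : Prop :=
  ∃ φ : relHomology d A B m ≃+ relHomology d' A' B' m,
    ∀ (ξ : C m) (h : ξ ∈ relCycles d A B m) (h' : f ξ ∈ relCycles d' A' B' m),
      φ (hcl d A B ξ h) = hcl d' A' B' (f ξ) h'

/-- The homomorphism induced in homology by an inclusion of constraint systems. -/
def inclInduced (d : ∀ m, C m →+ C (m-1)) (A B A' B' : ∀ m, AddSubgroup (C m))
    (hA : ∀ m, A m ≤ A' m) (hB : ∀ m, B m ≤ B' m) (m : ℕ) :
    relHomology d A B m →+ relHomology d A' B' m := by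
  have hZ : relCycles d A B m ≤ relCycles d A' B' m := by
    rintro ξ ⟨h1, h2⟩
    exact ⟨hA _ h1, hB _ h2⟩
  refine QuotientAddGroup.map _ _ (AddSubgroup.inclusion hZ) ?_
  intro x hx
  rw [AddSubgroup.mem_addSubgroupOf] at hx
  rw [AddSubgroup.mem_comap, AddSubgroup.mem_addSubgroupOf, AddSubgroup.coe_inclusion]
  refine ⟨?_, hZ x.2⟩
  exact (sup_le_sup (AddSubgroup.map_mono (hA _)) (hB _) : _ ≤ relBnds d A' B' m) hx.1

end generic

/-! ## Filtered simplices and their chain complexes -/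

/-- A simplex of `X` together with a block assignment of its vertices:
a candidate filtered simplex, the blocks recording the join decomposition
`Δ = Δ_0 ∗ ⋯ ∗ Δ_n`. -/
structure PreSimplex (X : Type u) [TopologicalSpace X] (m : ℕ) : Type u where
  map : C(TSimp m, X)
  block : Fin (m+1) → ℤ

variable {X : Type u} {Y : Type v} [TopologicalSpace X] [TopologicalSpace Y]

/-- The `j`-th face of a pre-simplex. -/
def PreSimplex.face {m : ℕ} (σ : PreSimplex X (m+1)) (j : Fin (m+2)) : PreSimplex X m :=
  ⟨σ.map.comp (faceMap m j), σ.block ∘ j.succAbove⟩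

/-- A generator system for chain complexes: generators and face operators. -/
structure SimpSystem : Type (u+1) where
  Gen : ℕ → Type u
  face : ∀ m : ℕ, Fin (m+2) → Gen (m+1) → Gen m

/-- The system of pre-filtered simplices of `X`. -/
abbrev filtSys (X : Type u) [TopologicalSpace X] : SimpSystem.{u} where
  Gen m := PreSimplex X m
  face _ j σ := σ.face j

/-- The system of all singular simplices of `X`. -/
abbrev singSys (X : Type u) [TopologicalSpace X] : SimpSystem.{u} where
  Gen m := C(TSimp m, X)
  face m j σ := σ.comp (faceMap m j)

namespace SimpSystem

variable (S : SimpSystem.{u}) (G : Type w) [AddCommGroup G]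

/-- Chains on the generators of `S`, with coefficients in `G`. -/
abbrev Chains (m : ℕ) : Type _ := S.Gen m →₀ G

/-- The boundary operator. -/
def bdry (m : ℕ) : S.Chains G (m+1) →+ S.Chains G m :=
  Finsupp.liftAddHom fun σ =>
    ∑ j : Fin (m+2), (-1 : ℤ) ^ (j : ℕ) • Finsupp.singleAddHom (S.face m j σ)

/-- The boundary operator, vanishing in degree `0`. -/
def bdryFrom : ∀ m : ℕ, S.Chains G m →+ S.Chains G (m-1)
  | 0 => 0
  | (m+1) => S.bdry G m

/-- The subgroup of chains all of whose simplices satisfy `P`. -/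
def suppIn {m : ℕ} (P : S.Gen m → Prop) : AddSubgroup (S.Chains G m) where
  carrier := {ξ | ∀ σ ∈ ξ.support, P σ}
  zero_mem' := by intro σ h; simp at h
  add_mem' := by
    classical
    intro a b ha hb σ h
    rcases Finset.mem_union.mp (Finsupp.support_add h) with h' | h'
    exacts [ha σ h', hb σ h']
  neg_mem' := by
    intro a ha σ h
    rw [Finsupp.support_neg] at h
    exact ha σ h

end SimpSystem

/-! ## Admissibility -/

/-- A singular simplex is `p`-admissible when, for every stratum `S`, the preimage
of `S` is contained in the skeleton of dimension `dim Δ - codim S + p S`. -/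
def MapAdmissible (F : FilteredSpace X) (p : Set X → ℤ) {m : ℕ} (τ : C(TSimp m, X)) : Prop :=
  ∀ S : Set X, F.IsStratum S → ∀ t : TSimp m, τ t ∈ S →
    (suppCard t : ℤ) ≤ (m : ℤ) - F.codim S + p S + 1

/-- A pre-simplex is a filtered simplex when its blocks are monotone and detect the
filtration: `σ⁻¹(X_i) = Δ_0 ∗ ⋯ ∗ Δ_i`. -/
def PreSimplex.IsFiltered (F : FilteredSpace X) {m : ℕ} (σ : PreSimplex X m) : Prop :=
  Monotone σ.block ∧
    ∀ i : ℤ, σ.map ⁻¹' (F.filt i) =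
      {t : TSimp m | ∀ j, (t : Fin (m+1) → ℝ) j ≠ 0 → σ.block j ≤ i}

/-- `p`-admissibility of a pre-simplex. -/
def PreSimplex.Admissible (F : FilteredSpace X) (p : Set X → ℤ) {m : ℕ}
    (σ : PreSimplex X m) : Prop :=
  MapAdmissible F p σ.map

/-- The allowable simplices of the `p`-intersection complex with support in the
region `W` : filtered, `p`-admissible, with image contained in `W`. -/
def Allowable (F : FilteredSpace X) (p : Set X → ℤ) (W : Set X) {m : ℕ}
    (σ : PreSimplex X m) : Prop :=
  σ.IsFiltered F ∧ σ.Admissible F p ∧ Set.range σ.map ⊆ W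

/-- The complex `C_*^{p̄}` of `p`-intersection chains (of filtered simplices),
with support in the region `W` : chains `ξ` such that every simplex of `ξ` and of
`∂ξ` is `p`-admissible (and carried by `W`). -/
def iChains (F : FilteredSpace X) (p : Set X → ℤ) (G : Type w) [AddCommGroup G]
    (W : Set X) (m : ℕ) : AddSubgroup ((filtSys X).Chains G m) :=
  (filtSys X).suppIn G (fun σ : PreSimplex X m => Allowable F p W σ) ⊓
    ((filtSys X).suppIn G (fun σ : PreSimplex X (m-1) => Allowable F p W σ)).comap
      ((filtSys X).bdryFrom G m)

/-- Intersection homology `H_*^{p̄}` of the part of `X` carried by the region `W`,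
relative to the region `W'` (absolute case: `W = univ`, `W' = ∅`). -/
abbrev iH (F : FilteredSpace X) (p : Set X → ℤ) (G : Type w) [AddCommGroup G]
    (W W' : Set X) (m : ℕ) : Type _ :=
  relHomology ((filtSys X).bdryFrom G) (fun k => iChains F p G W k)
    (fun k => iChains F p G W' k) m

/-- MacPherson's complex `I^{p̄}C_*` of singular intersection chains: all singular
simplices, `p̄`-admissibility as above. -/
def mChains (F : FilteredSpace X) (p : Set X → ℤ) (G : Type w) [AddCommGroup G]
    (m : ℕ) : AddSubgroup ((singSys X).Chains G m) :=
  (singSys X).suppIn G (fun τ : C(TSimp m, X) => MapAdmissible F p τ) ⊓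
    ((singSys X).suppIn G (fun τ : C(TSimp (m-1), X) => MapAdmissible F p τ)).comap
      ((singSys X).bdryFrom G m)

/-- The subcomplex of singular chains carried by `W`. -/
def sChains (X : Type u) [TopologicalSpace X] (G : Type w) [AddCommGroup G]
    (W : Set X) (m : ℕ) : AddSubgroup ((singSys X).Chains G m) :=
  (singSys X).suppIn G (fun τ : C(TSimp m, X) => Set.range τ ⊆ W)

/-- Singular homology of the pair of regions `(W, W')` of `X`. -/
abbrev sH (X : Type u) [TopologicalSpace X] (G : Type w) [AddCommGroup G]
    (W W' : Set X) (m : ℕ) : Type _ :=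
  relHomology ((singSys X).bdryFrom G) (fun k => sChains X G W k)
    (fun k => sChains X G W' k) m

/-! ## Pushforwards -/

/-- The canonical block assignment of a singular simplex of a filtered space:
the vertex `j` is assigned the lowest filtration level containing its image. -/
def canonicalBlock (F : FilteredSpace Y) {m : ℕ} (τ : C(TSimp m, Y)) : Fin (m+1) → ℤ :=
  fun j => sInf {i : ℤ | τ (vert m j) ∈ F.filt i}

/-- Pushforward of a pre-simplex along a continuous map, with the canonical blocks
of the target filtration. -/
def pushSimp (F' : FilteredSpace Y) (g : C(X, Y)) {m : ℕ} (σ : PreSimplex X m) :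
    PreSimplex Y m :=
  ⟨g.comp σ.map, canonicalBlock F' (g.comp σ.map)⟩

/-- Pushforward of chains along a continuous map (`σ ↦ f ∘ σ`). -/
def pushChain (F' : FilteredSpace Y) (g : C(X, Y)) (G : Type w) [AddCommGroup G]
    (m : ℕ) : (filtSys X).Chains G m →+ (filtSys Y).Chains G m :=
  Finsupp.mapDomain.addMonoidHom (pushSimp F' g)

/-- Forget the blocks: from filtered chains to singular chains. -/
def forgetChain (X : Type u) [TopologicalSpace X] (G : Type w) [AddCommGroup G]
    (m : ℕ) : (filtSys X).Chains G m →+ (singSys X).Chains G m :=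
  Finsupp.mapDomain.addMonoidHom (fun σ : PreSimplex X m => σ.map)

/-- Equip singular chains with canonical blocks. -/
def withBlocks (F : FilteredSpace X) (G : Type w) [AddCommGroup G] (m : ℕ) :
    (singSys X).Chains G m →+ (filtSys X).Chains G m :=
  Finsupp.mapDomain.addMonoidHom
    (fun τ : C(TSimp m, X) => (⟨τ, canonicalBlock F τ⟩ : PreSimplex X m))

/-! ## Tame (modered) intersection chains -/

/-- A pre-simplex is regular when its last join factor `Δ_n` is nonempty,
i.e. some vertex has block equal to the formal dimension of the space. -/
def PreSimplex.RegularS (F : FilteredSpace X) {m : ℕ} (σ : PreSimplex X m) : Prop :=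
  ∃ j, σ.block j = (F.dim : ℤ)

/-- The subgroup of chains carried by the singular set (all simplices singular). -/
def tSub (F : FilteredSpace X) (G : Type w) [AddCommGroup G] (m : ℕ) :
    AddSubgroup ((filtSys X).Chains G m) :=
  (filtSys X).suppIn G (fun σ : PreSimplex X m => ¬ σ.RegularS F)

/-- The quotient complex `𝔠_* = C_*(X)/C_*(Σ)`. -/
abbrev tChains (F : FilteredSpace X) (G : Type w) [AddCommGroup G] (m : ℕ) : Type _ :=
  (filtSys X).Chains G m ⧸ tSub F G m

/-- The projection onto the tame quotient. -/
def tProj (F : FilteredSpace X) (G : Type w) [AddCommGroup G] (m : ℕ) :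
    (filtSys X).Chains G m →+ tChains F G m :=
  QuotientAddGroup.mk' (tSub F G m)

open Classical in
/-- The regular part `∂_reg` of the boundary: only regular faces are kept. -/
def bdryReg (F : FilteredSpace X) (G : Type w) [AddCommGroup G] (m : ℕ) :
    (filtSys X).Chains G (m+1) →+ (filtSys X).Chains G m :=
  Finsupp.liftAddHom fun σ =>
    ∑ j : Fin (m+2), (-1 : ℤ) ^ (j : ℕ) •
      (if (σ.face j).RegularS F then Finsupp.singleAddHom (σ.face j) else 0)

/-- `∂_reg`, vanishing in degree 0. -/
def bdryRegFrom (F : FilteredSpace X) (G : Type w) [AddCommGroup G] :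
    ∀ m : ℕ, (filtSys X).Chains G m →+ (filtSys X).Chains G (m-1)
  | 0 => 0
  | (m+1) => bdryReg F G m

lemma bdryRegFrom_eq_zero (F : FilteredSpace X) (G : Type w) [AddCommGroup G] (m : ℕ)
    (ξ : (filtSys X).Chains G m) (hξ : ξ ∈ tSub F G m) :
    bdryRegFrom F G m ξ = 0 := by
  classical
  cases m with
  | zero => rfl
  | succ m =>
    show bdryReg F G m ξ = 0
    rw [bdryReg, Finsupp.liftAddHom_apply, Finsupp.sum]
    apply Finset.sum_eq_zero
    intro σ hσ
    have hns : ¬ σ.RegularS F := hξ σ hσ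
    have hface : ∀ j : Fin (m+2), ¬ (σ.face j).RegularS F := by
      intro j hj
      obtain ⟨k, hk⟩ := hj
      exact hns ⟨j.succAbove k, hk⟩
    have hzero : (∑ j : Fin (m+2), (-1 : ℤ) ^ (j : ℕ) •
        (if (σ.face j).RegularS F then Finsupp.singleAddHom (σ.face j) else 0) :
        G →+ (filtSys X).Chains G m) = 0 := by
      apply Finset.sum_eq_zero
      intro j _
      rw [if_neg (hface j), smul_zero]
    rw [hzero]
    rfl

/-- The differential `𝔡` induced by `∂_reg` on the tame quotient. -/
def tBdryFrom (F : FilteredSpace X) (G : Type w) [AddCommGroup G] (m : ℕ) :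
    tChains F G m →+ tChains F G (m-1) :=
  QuotientAddGroup.map _ _ (bdryRegFrom F G m)
    (by
      intro ξ hξ
      rw [AddSubgroup.mem_comap, bdryRegFrom_eq_zero F G m ξ hξ]
      exact zero_mem _)

/-- The classes of `p`-admissible chains in the tame quotient. -/
def tAdm (F : FilteredSpace X) (p : Set X → ℤ) (G : Type w) [AddCommGroup G] (m : ℕ) :
    AddSubgroup (tChains F G m) :=
  ((filtSys X).suppIn G
      (fun σ : PreSimplex X m => σ.IsFiltered F ∧ σ.Admissible F p)).map (tProj F G m)

/-- The tame `p`-intersection complex `𝔠_*^{p̄}` : classes of admissible chains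
whose `𝔡`-boundary is again (the class of) an admissible chain. -/
def tIC (F : FilteredSpace X) (p : Set X → ℤ) (G : Type w) [AddCommGroup G] (m : ℕ) :
    AddSubgroup (tChains F G m) :=
  tAdm F p G m ⊓ (tAdm F p G (m-1)).comap (tBdryFrom F G m)

/-- Tame intersection homology `𝔥_*^{p̄}(X; G)`. -/
abbrev tH (F : FilteredSpace X) (p : Set X → ℤ) (G : Type w) [AddCommGroup G] (m : ℕ) :
    Type _ :=
  relHomology (tBdryFrom F G) (fun k => tIC F p G k) (fun _ => ⊥) m

/-! ## Products with a factor -/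

/-- The product filtration on `M × X` : `(M × X)_i = M × X_i`. -/
def FilteredSpace.prodLeft (M : Type v) [TopologicalSpace M] [Nonempty M]
    (F : FilteredSpace X) : FilteredSpace (M × X) where
  dim := F.dim
  filt i := univ ×ˢ F.filt i
  filt_neg i h := by rw [F.filt_neg i h, Set.prod_empty]
  filt_mono := fun i j h => Set.prod_mono (le_refl _) (F.filt_mono h)
  filt_closed i := isClosed_univ.prod (F.filt_closed i)
  filt_top i h := by rw [F.filt_top i h, Set.univ_prod_univ]
  reg_nonempty := by
    obtain ⟨x, hx1, hx2⟩ := F.reg_nonempty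
    exact ⟨(Classical.arbitrary M, x), ⟨trivial, hx1⟩, fun h => hx2 h.2⟩

/-- The product filtration on `X × M` : `(X × M)_i = X_i × M`. -/
def FilteredSpace.prodRight (M : Type v) [TopologicalSpace M] [Nonempty M]
    (F : FilteredSpace X) : FilteredSpace (X × M) where
  dim := F.dim
  filt i := F.filt i ×ˢ univ
  filt_neg i h := by rw [F.filt_neg i h, Set.empty_prod]
  filt_mono := fun i j h => Set.prod_mono (F.filt_mono h) (le_refl _)
  filt_closed i := (F.filt_closed i).prod isClosed_univ
  filt_top i h := by rw [F.filt_top i h, Set.univ_prod_univ]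
  reg_nonempty := by
    obtain ⟨x, hx1, hx2⟩ := F.reg_nonempty
    exact ⟨(x, Classical.arbitrary M), ⟨hx1, trivial⟩, fun h => hx2 h.1⟩

/-- The perversity induced on `M × X` by a perversity on `X`
(a stratum `M × S` is sent to the value on `S`). -/
def pervProdLeft (p : Set X → ℤ) : Set (M' × X) → ℤ := fun T => p (Prod.snd '' T)

/-- The perversity induced on `X × M` by a perversity on `X`. -/
def pervProdRight (p : Set X → ℤ) : Set (X × M') → ℤ := fun T => p (Prod.fst '' T)

/-! ## The open cone -/

/-- The relation collapsing `L × {0}` in `L × [0,1)`. -/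
def coneSetoid (L : Type u) [TopologicalSpace L] :
    Setoid (L × {t : ℝ // 0 ≤ t ∧ t < 1}) where
  r a b := a = b ∨ (a.2.1 = 0 ∧ b.2.1 = 0)
  iseqv := by
    refine ⟨fun a => Or.inl rfl, ?_, ?_⟩
    · rintro a b (rfl | h)
      exacts [Or.inl rfl, Or.inr ⟨h.2, h.1⟩]
    · rintro a b c (rfl | h) (rfl | h')
      exacts [Or.inl rfl, Or.inr h', Or.inr h, Or.inr ⟨h.1, h'.2⟩]

/-- The open cone `c̊L = L × [0,1) / (L × {0})`. -/
abbrev OpenCone (L : Type u) [TopologicalSpace L] : Type u := Quotient (coneSetoid L)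

/-- The point `[x, t]` of the open cone. -/
def conePt {L : Type u} [TopologicalSpace L] (x : L) (t : {t : ℝ // 0 ≤ t ∧ t < 1}) :
    OpenCone L :=
  Quotient.mk (coneSetoid L) (x, t)

/-- The parameter `0` of the cone. -/
def czero : {t : ℝ // 0 ≤ t ∧ t < 1} := ⟨0, le_refl 0, zero_lt_one⟩

/-- The vertex `𝓌` of the open cone on a (nonempty) filtered space. -/
def coneVertexOf {L : Type u} [TopologicalSpace L] (FL : FilteredSpace L) : OpenCone L :=
  conePt FL.reg_nonempty.choose czero

/-- The cone `c̊A ⊆ c̊L` on a subset `A ⊆ L` (it contains the vertex; `c̊∅ = {𝓌}`). -/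
def coneSet {L : Type u} [TopologicalSpace L] (A : Set L) : Set (OpenCone L) :=
  {z | ∃ x t, z = conePt x t ∧ (t.1 = 0 ∨ x ∈ A)}

lemma coneSet_mono {L : Type u} [TopologicalSpace L] {A B : Set L} (h : A ⊆ B) :
    coneSet A ⊆ coneSet B := by
  rintro z ⟨x, t, rfl, h0 | hA⟩
  exacts [⟨x, t, rfl, Or.inl h0⟩, ⟨x, t, rfl, Or.inr (h hA)⟩]

lemma preimage_coneSet {L : Type u} [TopologicalSpace L] (A : Set L) :
    (Quotient.mk (coneSetoid L)) ⁻¹' (coneSet A) =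
      {a : L × {t : ℝ // 0 ≤ t ∧ t < 1} | a.2.1 = 0 ∨ a.1 ∈ A} := by
  ext ⟨x, t⟩
  constructor
  · rintro ⟨x', t', he, ht'⟩
    have hrel := Quotient.exact he
    rcases hrel with h | h
    · cases h
      exact ht'
    · exact Or.inl h.1
  · intro h
    exact ⟨x, t, rfl, h⟩

/-- The conical filtration on the open cone : `(c̊L)_i = c̊(L_{i-1})`. -/
def coneFiltered {L : Type u} [TopologicalSpace L] (FL : FilteredSpace L) :
    FilteredSpace (OpenCone L) where
  dim := FL.dim + 1
  filt i := if i < 0 then ∅ else coneSet (FL.filt (i-1))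
  filt_neg i h := by rw [if_pos h]
  filt_mono := by
    intro i j hij
    dsimp only
    by_cases hi : i < 0
    · rw [if_pos hi]; exact empty_subset _
    · rw [if_neg hi, if_neg (by omega)]
      exact coneSet_mono (FL.filt_mono (by omega))
  filt_closed i := by
    by_cases hi : i < 0
    · rw [if_pos hi]; exact isClosed_empty
    · rw [if_neg hi]
      rw [← isQuotientMap_quotient_mk'.isClosed_preimage]
      show IsClosed ((Quotient.mk (coneSetoid L)) ⁻¹' (coneSet (FL.filt (i-1))))
      rw [preimage_coneSet]
      have he : {a : L × {t : ℝ // 0 ≤ t ∧ t < 1} | a.2.1 = 0 ∨ a.1 ∈ FL.filt (i-1)} =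
          (univ ×ˢ {t : {t : ℝ // 0 ≤ t ∧ t < 1} | t.1 = 0}) ∪ (FL.filt (i-1) ×ˢ univ) := by
        ext ⟨x, t⟩
        simp only [Set.mem_setOf_eq, Set.mem_union, Set.mem_prod, Set.mem_univ, true_and,
          and_true]
      rw [he]
      refine IsClosed.union (isClosed_univ.prod ?_) ((FL.filt_closed _).prod isClosed_univ)
      have he2 : {t : {t : ℝ // 0 ≤ t ∧ t < 1} | t.1 = 0} =
          (Subtype.val : {t : ℝ // 0 ≤ t ∧ t < 1} → ℝ) ⁻¹' {0} := by rfl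
      rw [he2]
      exact isClosed_singleton.preimage continuous_subtype_val
  filt_top i h := by
    have h' : (0 : ℤ) ≤ i := by
      refine le_trans ?_ h
      positivity
    rw [if_neg (by omega)]
    rw [FL.filt_top (i-1) (by push_cast at h ⊢; omega)]
    apply Set.eq_univ_of_forall
    intro z
    obtain ⟨⟨x, t⟩, rfl⟩ := Quotient.exists_rep z
    exact ⟨x, t, rfl, Or.inr trivial⟩
  reg_nonempty := by
    obtain ⟨x, hx1, hx2⟩ := FL.reg_nonempty
    have hd1 : ((FL.dim + 1 : ℕ) : ℤ) - 1 = (FL.dim : ℤ) := by push_cast; ring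
    refine ⟨conePt x ⟨1/2, by norm_num, by norm_num⟩, ?_, ?_⟩
    · rw [if_neg (by push_cast; omega)]
      refine ⟨x, _, rfl, Or.inr ?_⟩
      rw [hd1]
      exact hx1
    · rw [if_neg (by push_cast; omega)]
      rintro ⟨x', t', he, hp⟩
      have hrel := Quotient.exact he
      rcases hrel with hq | hq
      · rcases hp with h0 | hA
        · rw [← congrArg (fun a => (Prod.snd a).1) hq] at h0
          norm_num at h0
        · apply hx2
          have hx' : x' = x := (congrArg Prod.fst hq).symm
          rw [hx'] at hA
          have hd2 : ((FL.dim + 1 : ℕ) : ℤ) - 1 - 1 = (FL.dim : ℤ) - 1 := by push_cast; ring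
          rw [hd2] at hA
          exact hA
      · norm_num at hq

/-- The perversity induced on `L` by a perversity on the cone `c̊L` :
`p̄(S) = p̄(S × ]0,1[)`. -/
def pervConeSlice {L : Type u} [TopologicalSpace L] (p : Set (OpenCone L) → ℤ) :
    Set L → ℤ :=
  fun S => p {z | ∃ x t, z = conePt x t ∧ x ∈ S ∧ t.1 ≠ 0}

/-! ## The intrinsic filtration -/

/-- Two points of a space are equivalent when some pointed neighbourhoods are
homeomorphic. -/
def PtEquiv (X : Type u) [TopologicalSpace X] (x y : X) : Prop :=
  ∃ (U V : Set X) (hU : IsOpen U) (hV : IsOpen V) (hx : x ∈ U) (hy : y ∈ V)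
    (h : U ≃ₜ V), h ⟨x, hx⟩ = ⟨y, hy⟩

lemma PtEquiv.refl (X : Type u) [TopologicalSpace X] (x : X) : PtEquiv X x x :=
  ⟨univ, univ, isOpen_univ, isOpen_univ, trivial, trivial, Homeomorph.refl _, rfl⟩

/-- The filtration of the intrinsic CS-set `X^*`: `X^*_i` is the union of the
equivalence classes contained in `X_i` (equivalently, formed of strata of
dimension at most `i`). -/
def intrinsicFilt {X : Type u} [TopologicalSpace X] (F : FilteredSpace X) (i : ℤ) :
    Set X :=
  {x | ∀ y, PtEquiv X x y → y ∈ F.filt i}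

/-- The intrinsic filtered space `X^*` associated with a filtered space. -/
def intrinsic {X : Type u} [TopologicalSpace X] (F : FilteredSpace X) :
    FilteredSpace X where
  dim := F.dim
  filt := intrinsicFilt F
  filt_neg i h := by
    rw [Set.eq_empty_iff_forall_notMem]
    intro x hx
    have := hx x (PtEquiv.refl X x)
    rw [F.filt_neg i h] at this
    exact this
  filt_mono := fun i j hij x hx y hy => F.filt_mono hij (hx y hy)
  filt_closed i := by
    rw [← isOpen_compl_iff, isOpen_iff_forall_mem_open]
    intro x hx
    rw [Set.mem_compl_iff, intrinsicFilt, Set.mem_setOf_eq, not_forall] at hx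
    obtain ⟨y, hy⟩ := hx
    rw [_root_.not_imp] at hy
    obtain ⟨⟨U, V, hU, hV, hxU, hyV, h, hhx⟩, hyF⟩ := hy
    refine ⟨Subtype.val '' (⇑h ⁻¹' (Subtype.val ⁻¹' (F.filt i)ᶜ)), ?_, ?_, ?_⟩
    · rintro _ ⟨u, hu, rfl⟩
      intro hcon
      exact hu (hcon (h u).1 ⟨U, V, hU, hV, u.2, (h u).2, h, rfl⟩)
    · exact hU.isOpenMap_subtype_val _
        ((h.continuous.isOpen_preimage _) (continuous_subtype_val.isOpen_preimage _
          (F.filt_closed i).isOpen_compl))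
    · refine ⟨⟨x, hxU⟩, ?_, rfl⟩
      show (h ⟨x, hxU⟩ : X) ∉ F.filt i
      rw [hhx]
      exact hyF
  filt_top i h := by
    apply Set.eq_univ_of_forall
    intro x y hy
    rw [F.filt_top i h]
    trivial
  reg_nonempty := by
    obtain ⟨x, hx1, hx2⟩ := F.reg_nonempty
    refine ⟨x, ?_, ?_⟩
    · intro y hy
      rw [F.filt_top _ (le_refl _)]
      trivial
    · intro hcon
      exact hx2 (hcon x (PtEquiv.refl X x))

/-- A stratum `S` of `X` is a source of a stratum `T` of `X^*` when `ν(S) ⊆ T`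
and `dim S = dim T`. -/
def IsSource {X : Type u} [TopologicalSpace X] (F : FilteredSpace X) (S T : Set X) :
    Prop :=
  F.IsStratum S ∧ (intrinsic F).IsStratum T ∧ S ⊆ T ∧
    F.stratumDim S = (intrinsic F).stratumDim T

/-- Equivalence of strata: some point of one is equivalent to some point of the
other. -/
def StrataEquiv (X : Type u) [TopologicalSpace X] (S S' : Set X) : Prop :=
  ∃ x ∈ S, ∃ y ∈ S', PtEquiv X x y

/-- `K`-perversity. -/
def IsKPerversity {X : Type u} [TopologicalSpace X] (F : FilteredSpace X)
    (p : Set X → ℤ) : Prop :=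
  F.IsPerversity p ∧
  (∀ S S' T, IsSource F S T → IsSource F S' T → p S = p S') ∧
  (∀ S R, F.IsStratum S → F.IsRegularStratum R → StrataEquiv X S R → 0 ≤ p S) ∧
  (∀ S S' T, F.IsStratum S → IsSource F S' T → F.IsSingularStratum S' →
    S ⊆ closure S' → StrataEquiv X S S' →
      p S ≤ p S' ∧ F.dualPerv p S' ≤ F.dualPerv p S)

open Classical in
/-- The perversity `ν_* p̄` induced on `X^*` by a perversity on `X` :
its value on a stratum `T` of `X^*` is the value of `p̄` on any source of `T`. -/
def pushPerv {X : Type u} [TopologicalSpace X] (F : FilteredSpace X) (p : Set X → ℤ) :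
    Set X → ℤ :=
  fun T => if h : ∃ S, IsSource F S T then p h.choose else 0

open Classical in
/-- The pullback perversity `f^* q̄` of a perversity along a stratified map:
`(f^* q̄)(S) = q̄(S^f)`. -/
def pullPerv {X : Type u} {Y : Type v} [TopologicalSpace X] [TopologicalSpace Y]
    (F : FilteredSpace X) (F' : FilteredSpace Y) (f : X → Y) (q : Set Y → ℤ) :
    Set X → ℤ :=
  fun S => if h : ∃ T, F'.IsStratum T ∧ f '' S ⊆ T then q h.choose else 0

/-- The intrinsic aggregation `ν : X → X^*` (the identity map), as a pushforward of
filtered chains: blocks are recomputed with respect to the intrinsic filtration. -/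
def nuChain {X : Type u} [TopologicalSpace X] (F : FilteredSpace X) (G : Type w)
    [AddCommGroup G] (m : ℕ) :
    (filtSys X).Chains G m →+ (filtSys X).Chains G m :=
  pushChain (intrinsic F) (ContinuousMap.id X) G m

/-! ## CS sets -/

/-- A CS-set: each `X_i ∖ X_{i-1}` is a topological `i`-manifold (possibly empty)
and points of `X_i ∖ X_{i-1}`, `i ≠ n`, have conical charts `U × c̊L ≅ V` with `L`
a compact (Hausdorff) filtered space of formal dimension `n - i - 1`. -/
def IsCSSet {X : Type u} [TopologicalSpace X] (F : FilteredSpace X) : Prop :=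
  (∀ i : ℕ, ∀ x, ∀ hx : x ∈ F.filt i \ F.filt ((i : ℤ) - 1),
      ∃ V : Set ↥(F.filt i \ F.filt ((i : ℤ) - 1)), IsOpen V ∧ ⟨x, hx⟩ ∈ V ∧
        Nonempty (↥V ≃ₜ (Fin i → ℝ))) ∧
  (∀ i : ℕ, i < F.dim → ∀ x ∈ F.filt i \ F.filt ((i : ℤ) - 1),
    ∃ V : Set X, IsOpen V ∧ x ∈ V ∧
    ∃ U : Set X, x ∈ U ∧ U ⊆ F.filt i \ F.filt ((i : ℤ) - 1) ∧
      IsOpen (Subtype.val ⁻¹' U : Set ↥(F.filt i \ F.filt ((i : ℤ) - 1))) ∧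
    ∃ (L : Type u) (_ : TopologicalSpace L) (_ : T2Space L) (_ : CompactSpace L)
      (FL : FilteredSpace L), (FL.dim : ℤ) = (F.dim : ℤ) - i - 1 ∧
    ∃ φ : (↥U × OpenCone L) ≃ₜ ↥V,
      (∀ u : ↥U, ((φ (u, coneVertexOf FL) : ↥V) : X) = (u : X)) ∧
      (∀ j : ℤ, 0 ≤ j → j ≤ (F.dim : ℤ) - i - 1 →
        Subtype.val '' (⇑φ '' (univ ×ˢ coneSet (FL.filt j))) = V ∩ F.filt (i + j + 1)))

/-- A normal CS-set: one admitting conical charts with connected links. -/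
def IsNormalCSSet {X : Type u} [TopologicalSpace X] (F : FilteredSpace X) : Prop :=
  (∀ i : ℕ, ∀ x, ∀ hx : x ∈ F.filt i \ F.filt ((i : ℤ) - 1),
      ∃ V : Set ↥(F.filt i \ F.filt ((i : ℤ) - 1)), IsOpen V ∧ ⟨x, hx⟩ ∈ V ∧
        Nonempty (↥V ≃ₜ (Fin i → ℝ))) ∧
  (∀ i : ℕ, i < F.dim → ∀ x ∈ F.filt i \ F.filt ((i : ℤ) - 1),
    ∃ V : Set X, IsOpen V ∧ x ∈ V ∧
    ∃ U : Set X, x ∈ U ∧ U ⊆ F.filt i \ F.filt ((i : ℤ) - 1) ∧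
      IsOpen (Subtype.val ⁻¹' U : Set ↥(F.filt i \ F.filt ((i : ℤ) - 1))) ∧
    ∃ (L : Type u) (_ : TopologicalSpace L) (_ : T2Space L) (_ : CompactSpace L)
      (_ : ConnectedSpace L) (FL : FilteredSpace L),
      (FL.dim : ℤ) = (F.dim : ℤ) - i - 1 ∧
    ∃ φ : (↥U × OpenCone L) ≃ₜ ↥V,
      (∀ u : ↥U, ((φ (u, coneVertexOf FL) : ↥V) : X) = (u : X)) ∧
      (∀ j : ℤ, 0 ≤ j → j ≤ (F.dim : ℤ) - i - 1 →
        Subtype.val '' (⇑φ '' (univ ×ˢ coneSet (FL.filt j))) = V ∩ F.filt (i + j + 1)))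

/-! ## Miscellaneous helpers -/

lemma SimpSystem.suppIn_mono (S : SimpSystem.{u}) (G : Type w) [AddCommGroup G] {m : ℕ}
    {P Q : S.Gen m → Prop} (h : ∀ σ, P σ → Q σ) : S.suppIn G P ≤ S.suppIn G Q :=
  fun ξ hξ σ hσ => h σ (hξ σ hσ)

lemma iChains_mono (F : FilteredSpace X) (p : Set X → ℤ) (G : Type w) [AddCommGroup G]
    {W W' : Set X} (h : W ⊆ W') (m : ℕ) :
    iChains F p G W m ≤ iChains F p G W' m := by
  apply inf_le_inf
  · exact (filtSys X).suppIn_mono G (fun σ hσ => ⟨hσ.1, hσ.2.1, hσ.2.2.trans h⟩)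
  · exact AddSubgroup.comap_mono
      ((filtSys X).suppIn_mono G (fun σ hσ => ⟨hσ.1, hσ.2.1, hσ.2.2.trans h⟩))

/-- The inclusion `x ↦ [x, t]` of `L` into the open cone. -/
def coneIncl {L : Type u} [TopologicalSpace L] (t : ℝ) (h0 : 0 ≤ t) (h1 : t < 1) :
    C(L, OpenCone L) where
  toFun x := conePt x ⟨t, h0, h1⟩
  continuous_toFun := by
    apply Continuous.comp
    · exact continuous_quotient_mk'
    · exact continuous_id.prodMk continuous_const

/-- The unit sphere `S^ℓ ⊆ ℝ^{ℓ+1}`. -/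
abbrev Sph (l : ℕ) : Set (EuclideanSpace ℝ (Fin (l+1))) := Metric.sphere 0 1

instance (l : ℕ) : Nonempty (Sph l) :=
  (NormedSpace.sphere_nonempty.mpr zero_le_one).to_subtype

/-- `p̄`-homogeneity: every singular stratum equivalent to a regular stratum has
`p̄(S) ≤ t̄(S)`. -/
def PHomogeneous {X : Type u} [TopologicalSpace X] (F : FilteredSpace X)
    (p : Set X → ℤ) : Prop :=
  ∀ S R, F.IsSingularStratum S → F.IsRegularStratum R → StrataEquiv X S R →
    p S ≤ F.codim S - 2

/-! ## Stratified spaces, more perversities, absolute homology -/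

/-- A stratified space: a filtered space in which the frontier condition holds for
strata: `S ∩ cl S' ≠ ∅` implies `S ⊆ cl S'`. -/
def FilteredSpace.IsStratifiedSpace {X : Type u} [TopologicalSpace X]
    (F : FilteredSpace X) : Prop :=
  ∀ S S', F.IsStratum S → F.IsStratum S' → (S ∩ closure S').Nonempty → S ⊆ closure S'

open Classical in
/-- The maximal (top) perversity `t̄` : `t̄(S) = codim S - 2` on singular strata. -/
def tPerv {X : Type u} [TopologicalSpace X] (F : FilteredSpace X) : Set X → ℤ :=
  fun S => if F.IsRegularStratum S then 0 else F.codim S - 2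

/-- Absolute `p̄`-intersection homology of the region `W` of `X`. -/
abbrev iHa {X : Type u} [TopologicalSpace X] (F : FilteredSpace X) (p : Set X → ℤ)
    (G : Type w) [AddCommGroup G] (W : Set X) (m : ℕ) : Type _ :=
  relHomology ((filtSys X).bdryFrom G) (fun k => iChains F p G W k) (fun _ => ⊥) m

/-- Absolute singular homology of the region `W` of `X`. -/
abbrev sHa (X : Type u) [TopologicalSpace X] (G : Type w) [AddCommGroup G]
    (W : Set X) (m : ℕ) : Type _ :=
  relHomology ((singSys X).bdryFrom G) (fun k => sChains X G W k) (fun _ => ⊥) m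

/-- MacPherson's singular intersection homology `I^{p̄}H_*`. -/
abbrev mH {X : Type u} [TopologicalSpace X] (F : FilteredSpace X) (p : Set X → ℤ)
    (G : Type w) [AddCommGroup G] (m : ℕ) : Type _ :=
  relHomology ((singSys X).bdryFrom G) (fun k => mChains F p G k) (fun _ => ⊥) m

/-! ## Fatal faces and the defect -/

/-- The vertex set of the smallest face `F_S` of `Δ` containing `σ⁻¹(S)`. -/
def vtx {X : Type u} [TopologicalSpace X] {m : ℕ} (σ : PreSimplex X m) (S : Set X) :
    Set (Fin (m+1)) :=
  {j | ∃ t : TSimp m, σ.map t ∈ S ∧ (t : Fin (m+1) → ℝ) j ≠ 0}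

/-- The candidates for the fatal face: proper faces `F_S` with
`dim F_S = dim Δ - codim S + p̄(S)`. -/
def fatalCands {X : Type u} [TopologicalSpace X] (F : FilteredSpace X) (p : Set X → ℤ)
    {m : ℕ} (σ : PreSimplex X m) : Set (Set (Fin (m+1))) :=
  {A | ∃ S, F.IsStratum S ∧ A = vtx σ S ∧ A ≠ univ ∧
    ((A.ncard : ℤ) = (m : ℤ) - F.codim S + p S + 1)}

/-- `A` is (the vertex set of) the `p̄`-fatal face of `σ`: the least candidate. -/
def IsFatalIdx {X : Type u} [TopologicalSpace X] (F : FilteredSpace X) (p : Set X → ℤ)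
    {m : ℕ} (σ : PreSimplex X m) (A : Set (Fin (m+1))) : Prop :=
  A ∈ fatalCands F p σ ∧ ∀ B ∈ fatalCands F p σ, A ⊆ B

/-- `S` is the `p̄`-guilty stratum of `σ` : `F_S` is the fatal face of `σ`. -/
def IsGuilty {X : Type u} [TopologicalSpace X] (F : FilteredSpace X) (p : Set X → ℤ)
    {m : ℕ} (σ : PreSimplex X m) (S : Set X) : Prop :=
  F.IsStratum S ∧ IsFatalIdx F p σ (vtx σ S) ∧
    (((vtx σ S).ncard : ℤ) = (m : ℤ) - F.codim S + p S + 1)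

/-- The `p̄`-defect `ℓ_{p̄}(σ)` : the codimension of the guilty stratum, `0` if `σ` is
of `p̄`-intersection. -/
def defect {X : Type u} [TopologicalSpace X] (F : FilteredSpace X) (p : Set X → ℤ)
    {m : ℕ} (σ : PreSimplex X m) : ℤ :=
  sSup ({0} ∪ {c | ∃ S, IsGuilty F p σ S ∧ c = F.codim S})

/-- The linear simplex with vertices `v j` (a linear self-map of the standard
simplex). -/
def linMap {m : ℕ} (v : Fin (m+1) → TSimp m) : C(TSimp m, TSimp m) where
  toFun t := ⟨fun i => ∑ j, (t : Fin (m+1) → ℝ) j * (v j : Fin (m+1) → ℝ) i, by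
    refine ⟨fun i => ?_, ?_⟩
    · exact Finset.sum_nonneg fun j _ => mul_nonneg (t.2.1 j) ((v j).2.1 i)
    · rw [Finset.sum_comm]
      have he : ∀ j : Fin (m+1),
          (∑ i, (t : Fin (m+1) → ℝ) j * (v j : Fin (m+1) → ℝ) i) = (t : Fin (m+1) → ℝ) j := by
        intro j
        rw [← Finset.mul_sum]; convert mul_one _ using 2; exact (v j).2.2
      rw [Finset.sum_congr rfl (fun j _ => he j)]
      exact t.2.2⟩
  continuous_toFun := by
    apply Continuous.subtype_mk
    apply continuous_pi
    intro i
    apply continuous_finset_sum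
    intro j _
    exact ((continuous_apply j).comp continuous_subtype_val).mul continuous_const

/-!
Homotopy invariance comes from the prism operator. The simplices
`[(0,0), …, (k,0), (k,1), …, (n,1)]` triangulate `Δⁿ × [0,1]`; composing them with
`φ ∘ (σ × id)` and giving them the canonical blocks of the filtration of `Y` yields a chain
homotopy `P` with `∂P + P∂ = g_* - f_*`, so `g_*ξ - f_*ξ = ∂(Pξ)` for a cycle `ξ`. What has to
be checked is that `Pξ` is a `q̄`-intersection chain when `ξ` is a `p̄`-intersection chain.

The prism simplices are filtered: the points of `Δ` at which the largest block of `σ` equals `b`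
form a convex set, which `σ` maps into one stratum `S` of `X`; `φ` maps `S × [0,1]` into one
stratum of `Y`, and the points with a smaller largest block lie in the closure of that set. So
the filtration level of `φ (σ t, u)` is a monotone function of the largest block at `t`.
They are `q̄`-admissible: collapsing the `k`-th prism simplex onto `Δⁿ` merges only the vertices
`k` and `k+1`, and for the stratum `T ⊇ φ (S × [0,1])` the hypotheses `codim T ≤ codim S` and
`φ^* D q̄ ≤ D p̄` give `codim T - q̄ T ≤ codim S - p̄ S`.
-/

lemma Fin.val_succAbove {n : ℕ} (p : Fin (n+1)) (i : Fin n) :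
    (p.succAbove i : ℕ) = if (i : ℕ) < p then (i : ℕ) else (i : ℕ) + 1 := by
  unfold Fin.succAbove
  split_ifs <;> simp_all [Fin.lt_def]

lemma Fin.val_predAbove {n : ℕ} (p : Fin n) (i : Fin (n+1)) :
    (p.predAbove i : ℕ) = if (p : ℕ) < i then (i : ℕ) - 1 else (i : ℕ) := by
  unfold Fin.predAbove
  split_ifs with h1 h2 h2 <;> rw [Fin.lt_def, Fin.val_castSucc] at h1 <;> simp <;> omega

lemma Fin.sum_sub_telescope {M : Type*} [AddCommGroup M] {n : ℕ} (a b : Fin (n+1) → M)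
    (h : ∀ i : Fin n, b i.castSucc = a i.succ) :
    ∑ k, (a k - b k) = a 0 - b (Fin.last n) := by
  rw [Finset.sum_sub_distrib, Fin.sum_univ_succ a, Fin.sum_univ_castSucc b]
  simp only [h]
  abel

lemma hcl_eq_of_sub_eq_bdry {C : ℕ → Type w} [∀ m, AddCommGroup (C m)]
    (d : ∀ m, C m →+ C (m-1)) (A B : ∀ m, AddSubgroup (C m)) {m : ℕ} {ξ ξ' : C m}
    (hξ : ξ ∈ relCycles d A B m) (hξ' : ξ' ∈ relCycles d A B m) {η : C (m+1)}
    (hη : η ∈ A (m+1)) (h : d (m+1) η = ξ' - ξ) : hcl d A B ξ hξ = hcl d A B ξ' hξ' := by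
  rw [hcl, hcl, QuotientAddGroup.eq, AddSubgroup.mem_addSubgroupOf]
  refine ⟨?_, SetLike.coe_mem _⟩
  rw [AddSubgroup.coe_add, AddSubgroup.coe_neg, neg_add_eq_sub]
  exact AddSubgroup.mem_sup_left (AddSubgroup.mem_map.mpr ⟨η, hη, h⟩)

/-! ### Supports of points of the standard simplex -/

namespace stdSimplex

variable {ι κ : Type*} [Fintype ι] [Fintype κ]

def support (t : stdSimplex ℝ ι) : Finset ι := by
  classical exact Finset.univ.filter fun i => t i ≠ 0

lemma mem_support {t : stdSimplex ℝ ι} {i : ι} : i ∈ support t ↔ t i ≠ 0 := by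
  classical simp [support]

lemma support_nonempty (t : stdSimplex ℝ ι) : (support t).Nonempty := by
  by_contra h
  have hzero : ∀ i, t i = 0 := fun i => by_contra fun hi => h ⟨i, mem_support.mpr hi⟩
  simpa [hzero] using sum_eq_one t

lemma map_apply_ne_zero_iff (f : ι → κ) (t : stdSimplex ℝ ι) (y : κ) :
    map f t y ≠ 0 ↔ ∃ i, f i = y ∧ t i ≠ 0 := by
  classical
  rw [map_coe, FunOnFinite.linearMap_apply_apply, Ne,
    Finset.sum_eq_zero_iff_of_nonneg fun i _ => zero_le t i]
  simp

lemma support_map [DecidableEq κ] (f : ι → κ) (t : stdSimplex ℝ ι) :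
    support (map f t) = (support t).image f := by
  ext y
  rw [mem_support, map_apply_ne_zero_iff, Finset.mem_image]
  simp [mem_support, and_comm]

lemma support_eq_union_of_mem_openSegment [DecidableEq ι] {x y z : stdSimplex ℝ ι}
    (hz : (z : ι → ℝ) ∈ openSegment ℝ (x : ι → ℝ) y) :
    support z = support x ∪ support y := by
  obtain ⟨a, b, ha, hb, -, hz⟩ := hz
  ext i
  have hzi : z i = a * x i + b * y i := by
    rw [← hz]; rfl
  rw [Finset.mem_union, mem_support, mem_support, mem_support, hzi, Ne,
    add_eq_zero_iff_of_nonneg (mul_nonneg ha.le (zero_le x i)) (mul_nonneg hb.le (zero_le y i))]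
  simp only [mul_eq_zero, ha.ne', hb.ne', false_or, not_and_or]

lemma map_const [DecidableEq κ] (c : κ) (t : stdSimplex ℝ ι) :
    map (fun _ => c) t = vertex c := by
  ext y
  rw [map_coe, FunOnFinite.linearMap_apply_apply, vertex_coe, Pi.single_apply]
  split_ifs with h
  · simp [h]
  · simp [Ne.symm h]

variable (β : ι → ℤ)

def supportSup (t : stdSimplex ℝ ι) : ℤ := (support t).sup' (support_nonempty t) β

variable {β}

lemma le_supportSup {t : stdSimplex ℝ ι} {i : ι} (hi : t i ≠ 0) : β i ≤ supportSup β t :=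
  Finset.le_sup' β (mem_support.mpr hi)

lemma supportSup_le_iff {t : stdSimplex ℝ ι} {b : ℤ} :
    supportSup β t ≤ b ↔ ∀ i, t i ≠ 0 → β i ≤ b := by
  simp [supportSup, Finset.sup'_le_iff, mem_support]

lemma exists_supportSup_eq (t : stdSimplex ℝ ι) : ∃ i, t i ≠ 0 ∧ supportSup β t = β i := by
  obtain ⟨i, hi, he⟩ := Finset.exists_mem_eq_sup' (support_nonempty t) β
  exact ⟨i, mem_support.mp hi, he⟩

lemma supportSup_map (f : κ → ι) (t : stdSimplex ℝ κ) :
    supportSup β (map f t) = supportSup (β ∘ f) t := by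
  classical
  simp only [supportSup, support_map]
  exact Finset.sup'_image ..

lemma supportSup_vertex [DecidableEq ι] (i : ι) : supportSup β (vertex i) = β i := by
  have : support (vertex (S := ℝ) i) = {i} := by
    ext j; simp [mem_support, Pi.single_apply]
  simp [supportSup, this]

lemma supportSup_of_mem_openSegment {x y z : stdSimplex ℝ ι}
    (hz : (z : ι → ℝ) ∈ openSegment ℝ (x : ι → ℝ) y) :
    supportSup β z = max (supportSup β x) (supportSup β y) := by
  classical
  simp only [supportSup, support_eq_union_of_mem_openSegment hz]
  exact Finset.sup'_union (support_nonempty x) (support_nonempty y) β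

lemma openSegment_subset_image_supportSup_eq (x y : stdSimplex ℝ ι) :
    openSegment ℝ (x : ι → ℝ) y ⊆ Subtype.val ''
      {z : stdSimplex ℝ ι | supportSup β z = max (supportSup β x) (supportSup β y)} := by
  intro z hz
  have hzΔ : z ∈ stdSimplex ℝ ι := (convex_stdSimplex ℝ ι).openSegment_subset x.2 y.2 hz
  exact ⟨⟨z, hzΔ⟩, supportSup_of_mem_openSegment (z := ⟨z, hzΔ⟩) hz, rfl⟩

lemma convex_supportSup_eq (b : ℤ) :
    Convex ℝ (Subtype.val '' {t : stdSimplex ℝ ι | supportSup β t = b}) := by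
  rw [convex_iff_openSegment_subset]
  rintro _ ⟨x, rfl, rfl⟩ _ ⟨y, hy, rfl⟩
  have := openSegment_subset_image_supportSup_eq (β := β) x y
  rw [hy.out, max_self] at this
  exact this

lemma isPreconnected_supportSup_eq (b : ℤ) :
    IsPreconnected {t : stdSimplex ℝ ι | supportSup β t = b} :=
  Topology.IsInducing.subtypeVal.isPreconnected_image.mp (convex_supportSup_eq b).isPreconnected

lemma mem_closure_supportSup_eq {t t' : stdSimplex ℝ ι} (h : supportSup β t ≤ supportSup β t') :
    t ∈ closure {s : stdSimplex ℝ ι | supportSup β s = supportSup β t'} := by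
  rw [closure_subtype]
  refine closure_mono ?_ (segment_subset_closure_openSegment (left_mem_segment ℝ _ (t' : ι → ℝ)))
  have := openSegment_subset_image_supportSup_eq (β := β) t t'
  rw [max_eq_right h] at this
  exact this

end stdSimplex

open stdSimplex

lemma faceMap_apply (m : ℕ) (j : Fin (m+2)) (t : TSimp m) :
    faceMap m j t = map j.succAbove t := by
  classical
  ext i
  rw [map_coe, FunOnFinite.linearMap_apply_apply]
  change Fin.insertNth (α := fun _ => ℝ) j 0 (t : Fin (m+1) → ℝ) i = _
  refine Fin.succAboveCases j ?_ (fun l => ?_) i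
  · simp [Fin.succAbove_ne]
  · simp [Fin.succAbove_right_injective.eq_iff, Finset.filter_eq']

lemma vert_eq_vertex (m : ℕ) (j : Fin (m+1)) : vert m j = vertex j := by
  ext i
  change (if i = j then (1 : ℝ) else 0) = _
  simp [Pi.single_apply]

lemma suppCard_eq_card_support {m : ℕ} (t : TSimp m) : suppCard t = (support t).card := by
  classical
  unfold suppCard support
  congr 1
  exact Finset.filter_congr_decidable ..

lemma suppCard_le_suppCard_map_predAbove {m : ℕ} (k : Fin (m+1)) (t : TSimp (m+1)) :
    suppCard t ≤ suppCard (map k.predAbove t) + 1 := by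
  classical
  rw [suppCard_eq_card_support, suppCard_eq_card_support, support_map]
  have hinj : Set.InjOn k.predAbove ((support t).erase k.castSucc) := fun a ha b hb hab => by
    rw [← Fin.succAbove_predAbove (Finset.ne_of_mem_erase ha),
      ← Fin.succAbove_predAbove (Finset.ne_of_mem_erase hb), hab]
  calc (support t).card ≤ ((support t).erase k.castSucc).card + 1 := by
        have := Finset.pred_card_le_card_erase (s := support t) (a := k.castSucc); omega
    _ = (((support t).erase k.castSucc).image k.predAbove).card + 1 := by
        rw [Finset.card_image_of_injOn hinj]
    _ ≤ ((support t).image k.predAbove).card + 1 := by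
        gcongr; exact Finset.erase_subset _ _

/-! ### Filtration levels and strata -/

namespace FilteredSpace

variable {X : Type u} [TopologicalSpace X] (F : FilteredSpace X)

def level (x : X) : ℤ := sInf {i : ℤ | x ∈ F.filt i}

variable {F}

lemma mem_filt_iff_level_le {x : X} {i : ℤ} : x ∈ F.filt i ↔ F.level x ≤ i := by
  have hbdd : BddBelow {i : ℤ | x ∈ F.filt i} := ⟨0, fun i hi => by
    by_contra! hneg
    simp [F.filt_neg i hneg] at hi⟩
  have hne : {i : ℤ | x ∈ F.filt i}.Nonempty := ⟨F.dim, by simp [F.filt_top _ le_rfl]⟩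
  exact ⟨fun hi => csInf_le hbdd hi, fun hi => F.filt_mono hi (Int.csInf_mem hne hbdd)⟩

lemma level_eq_of_mem {x : X} {i : ℤ} (hx : x ∈ F.filt i \ F.filt (i-1)) : F.level x = i := by
  rw [mem_sdiff, mem_filt_iff_level_le, mem_filt_iff_level_le] at hx
  omega

lemma level_mem (x : X) : x ∈ F.filt (F.level x) \ F.filt (F.level x - 1) := by
  rw [mem_sdiff, mem_filt_iff_level_le, mem_filt_iff_level_le]
  omega

lemma level_le_dim (x : X) : F.level x ≤ F.dim :=
  mem_filt_iff_level_le.mp (by simp [F.filt_top _ le_rfl])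

lemma isStratumDim_connectedComponentIn_level (x : X) :
    F.IsStratumDim (connectedComponentIn (F.filt (F.level x) \ F.filt (F.level x - 1)) x)
      (F.level x) :=
  ⟨x, level_mem x, rfl⟩

lemma IsStratumDim.subset {S : Set X} {i : ℤ} (h : F.IsStratumDim S i) :
    S ⊆ F.filt i \ F.filt (i-1) := by
  obtain ⟨x, -, rfl⟩ := h
  exact connectedComponentIn_subset _ _

lemma IsStratumDim.level_eq {S : Set X} {i : ℤ} (h : F.IsStratumDim S i) {x : X}
    (hx : x ∈ S) : F.level x = i :=
  level_eq_of_mem (h.subset hx)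

lemma IsStratumDim.nonempty {S : Set X} {i : ℤ} (h : F.IsStratumDim S i) : S.Nonempty := by
  obtain ⟨x, hx, rfl⟩ := h
  exact ⟨x, mem_connectedComponentIn hx⟩

lemma IsStratumDim.stratumDim_eq {S : Set X} {i : ℤ} (h : F.IsStratumDim S i) :
    F.stratumDim S = i := by
  have hex : ∃ i, F.IsStratumDim S i := ⟨i, h⟩
  obtain ⟨x, hx⟩ := h.nonempty
  rw [stratumDim, dif_pos hex, ← hex.choose_spec.level_eq hx, h.level_eq hx]

lemma IsStratumDim.codim_eq {S : Set X} {i : ℤ} (h : F.IsStratumDim S i) :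
    F.codim S = F.dim - i := by
  rw [codim, h.stratumDim_eq]

lemma IsStratumDim.isRegularStratum_iff {S : Set X} {i : ℤ} (h : F.IsStratumDim S i) :
    F.IsRegularStratum S ↔ i = F.dim := by
  refine ⟨fun hreg => ?_, fun hi => by subst hi; exact h⟩
  obtain ⟨x, hx⟩ := h.nonempty
  rw [← h.level_eq hx, hreg.level_eq hx]

lemma IsStratum.level_eq_level {S : Set X} (h : F.IsStratum S) {x y : X} (hx : x ∈ S)
    (hy : y ∈ S) : F.level x = F.level y := by
  obtain ⟨i, hi⟩ := h
  rw [hi.level_eq hx, hi.level_eq hy]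

lemma IsStratum.eq_of_mem {S S' : Set X} (h : F.IsStratum S) (h' : F.IsStratum S') {x : X}
    (hx : x ∈ S) (hx' : x ∈ S') : S = S' := by
  obtain ⟨i, y, -, rfl⟩ := h
  obtain ⟨i', y', -, rfl⟩ := h'
  have hii : i = i' := by
    rw [← level_eq_of_mem (connectedComponentIn_subset _ _ hx),
      level_eq_of_mem (connectedComponentIn_subset _ _ hx')]
  subst hii
  rw [connectedComponentIn_eq hx, connectedComponentIn_eq hx']

lemma IsStratum.isRegularStratum_of_codim_nonpos {S : Set X} (h : F.IsStratum S)
    (hc : F.codim S ≤ 0) : F.IsRegularStratum S := by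
  obtain ⟨i, hi⟩ := h
  obtain ⟨x, hx⟩ := hi.nonempty
  have hdim := level_le_dim (F := F) x
  rw [hi.level_eq hx] at hdim
  rw [hi.codim_eq] at hc
  rw [hi.isRegularStratum_iff]
  omega

lemma codim_sub_le_dualPerv_add_two {p : Set X → ℤ} (hp : F.IsPerversity p) (S : Set X) :
    F.codim S - p S ≤ F.dualPerv p S + 2 := by
  unfold dualPerv
  split_ifs with hreg
  · rw [hp S hreg, (hreg : F.IsStratumDim S F.dim).codim_eq]
    omega
  · omega

lemma codim_sub_perv_le_of_dualPerv_le {Y : Type v} [TopologicalSpace Y] {F' : FilteredSpace Y}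
    {p : Set X → ℤ} {q : Set Y → ℤ} (hp : F.IsPerversity p) (hq : F'.IsPerversity q)
    {S : Set X} {T : Set Y} (hT : F'.IsStratum T)
    (hcodim : F'.codim T ≤ F.codim S) (hD : F'.dualPerv q T ≤ F.dualPerv p S) :
    F'.codim T - q T ≤ F.codim S - p S := by
  by_cases hreg : F.IsRegularStratum S
  · have hS0 : F.codim S = 0 := by rw [(hreg : F.IsStratumDim S F.dim).codim_eq]; omega
    have hTreg := hT.isRegularStratum_of_codim_nonpos (hS0 ▸ hcodim)
    rw [hS0, hp S hreg, hq T hTreg, (hTreg : F'.IsStratumDim T F'.dim).codim_eq]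
    omega
  · have hSD : F.dualPerv p S = F.codim S - 2 - p S := if_neg hreg
    have := codim_sub_le_dualPerv_add_two hq T
    omega

end FilteredSpace

lemma connectedComponentIn_prod_univ {X : Type u} {M : Type v} [TopologicalSpace X]
    [TopologicalSpace M] [PreconnectedSpace M] {A : Set X} {x : X} (hx : x ∈ A) (u : M) :
    connectedComponentIn (A ×ˢ (univ : Set M)) (x, u) = connectedComponentIn A x ×ˢ univ := by
  apply Subset.antisymm
  · intro z hz
    refine ⟨?_, trivial⟩
    have himg : Prod.fst '' connectedComponentIn (A ×ˢ (univ : Set M)) (x, u) ⊆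
        connectedComponentIn A x := by
      apply IsPreconnected.subset_connectedComponentIn
      · exact isPreconnected_connectedComponentIn.image _ continuous_fst.continuousOn
      · exact ⟨(x, u), mem_connectedComponentIn ⟨hx, trivial⟩, rfl⟩
      · rintro _ ⟨w, hw, rfl⟩
        exact (connectedComponentIn_subset _ _ hw).1
    exact himg ⟨z, hz, rfl⟩
  · apply IsPreconnected.subset_connectedComponentIn
    · exact isPreconnected_connectedComponentIn.prod isPreconnected_univ
    · exact ⟨mem_connectedComponentIn hx, trivial⟩
    · exact prod_mono (connectedComponentIn_subset _ _) le_rfl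

namespace FilteredSpace

variable {X : Type u} [TopologicalSpace X] {F : FilteredSpace X}
  {M : Type v} [TopologicalSpace M] [Nonempty M] [PreconnectedSpace M]

lemma IsStratumDim.prod_univ {S : Set X} {i : ℤ} (h : F.IsStratumDim S i) :
    (F.prodRight M).IsStratumDim (S ×ˢ univ) i := by
  obtain ⟨x, hx, rfl⟩ := h
  have hdiff : (F.prodRight M).filt i \ (F.prodRight M).filt (i-1) =
      (F.filt i \ F.filt (i-1)) ×ˢ univ := by
    ext; simp [prodRight]
  refine ⟨(x, Classical.arbitrary M), by rw [hdiff]; exact ⟨hx, trivial⟩, ?_⟩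
  rw [hdiff, connectedComponentIn_prod_univ hx]

lemma IsStratumDim.codim_prod_univ {S : Set X} {i : ℤ} (h : F.IsStratumDim S i) :
    (F.prodRight M).codim (S ×ˢ univ) = F.codim S := by
  rw [h.prod_univ.codim_eq, h.codim_eq]
  rfl

lemma IsStratumDim.dualPerv_prod_univ {S : Set X} {i : ℤ} (h : F.IsStratumDim S i)
    (p : Set X → ℤ) :
    (F.prodRight M).dualPerv (pervProdRight p) (S ×ˢ univ) = F.dualPerv p S := by
  have hprod := h.prod_univ (M := M)
  have hp : pervProdRight p (S ×ˢ (univ : Set M)) = p S := by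
    rw [pervProdRight, fst_image_prod _ univ_nonempty]
  simp only [dualPerv, hprod.isRegularStratum_iff, h.isRegularStratum_iff, hprod.codim_eq,
    h.codim_eq, hp]
  rfl

end FilteredSpace

section FilteredSimplex

variable {X : Type u} {Y : Type v} [TopologicalSpace X] [TopologicalSpace Y]
  {F : FilteredSpace X} {m : ℕ} {σ : PreSimplex X m}

lemma PreSimplex.IsFiltered.level_map (hσ : σ.IsFiltered F) (t : TSimp m) :
    F.level (σ.map t) = supportSup σ.block t := by
  refine eq_of_forall_ge_iff fun i => ?_
  rw [← FilteredSpace.mem_filt_iff_level_le, supportSup_le_iff, ← mem_preimage, hσ.2 i]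
  rfl

lemma PreSimplex.IsFiltered.map_mem_connectedComponentIn (hσ : σ.IsFiltered F)
    {t t' : TSimp m} (h : supportSup σ.block t' = supportSup σ.block t) :
    σ.map t' ∈ connectedComponentIn
      (F.filt (F.level (σ.map t)) \ F.filt (F.level (σ.map t) - 1)) (σ.map t) := by
  have hlevel : σ.map '' {s | supportSup σ.block s = supportSup σ.block t} ⊆
      F.filt (F.level (σ.map t)) \ F.filt (F.level (σ.map t) - 1) := by
    rintro _ ⟨s, hs, rfl⟩
    rw [show F.level (σ.map t) = F.level (σ.map s) by rw [hσ.level_map, hσ.level_map, hs.out]]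
    exact FilteredSpace.level_mem _
  exact (isPreconnected_supportSup_eq _).image _ σ.map.continuous.continuousOn
    |>.subset_connectedComponentIn ⟨t, rfl, rfl⟩ hlevel ⟨t', h, rfl⟩

lemma PreSimplex.IsFiltered.level_homotopy_le {F' : FilteredSpace Y} {φ : C(X × unitInterval, Y)}
    (hφ : (F.prodRight unitInterval).IsStratifiedMap F' φ) (hσ : σ.IsFiltered F)
    {t t' : TSimp m} (h : supportSup σ.block t ≤ supportSup σ.block t') (u u' : unitInterval) :
    F'.level (φ (σ.map t, u)) ≤ F'.level (φ (σ.map t', u')) := by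
  set A := {s : TSimp m | supportSup σ.block s = supportSup σ.block t'}
  have hS := FilteredSpace.isStratumDim_connectedComponentIn_level (F := F) (σ.map t')
  obtain ⟨T, hT, hφT, -⟩ := hφ.2 _ ⟨_, hS.prod_univ (M := unitInterval)⟩
  have hA : MapsTo (fun p : TSimp m × unitInterval => φ (σ.map p.1, p.2)) (A ×ˢ univ)
      (F'.filt (F'.level (φ (σ.map t', u')))) := by
    rintro ⟨s, v⟩ ⟨hs, -⟩
    have hmem : ∀ s' v', supportSup σ.block s' = supportSup σ.block t' → φ (σ.map s', v') ∈ T :=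
      fun s' v' hs' => hφT ⟨_, ⟨hσ.map_mem_connectedComponentIn hs', trivial⟩, rfl⟩
    rw [FilteredSpace.mem_filt_iff_level_le,
      hT.level_eq_level (hmem s v hs) (hmem t' u' rfl)]
  have hclosure : (t, u) ∈ closure (A ×ˢ univ) := by
    rw [closure_prod_eq, closure_univ]
    exact ⟨mem_closure_supportSup_eq h, trivial⟩
  have := map_mem_closure (by fun_prop) hclosure hA
  rwa [(F'.filt_closed _).closure_eq, FilteredSpace.mem_filt_iff_level_le] at this

end FilteredSimplex

/-! ### The prism -/

def prismTime {n : ℕ} (k : Fin (n+1)) (i : Fin (n+2)) : Fin 2 := if (k : ℕ) < i then 1 else 0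

/-- The `k`-th simplex `[(0,0), …, (k,0), (k,1), …, (n,1)]` of the standard triangulation
of `Δⁿ × [0,1]`. -/
def prismMap (n : ℕ) (k : Fin (n+1)) : C(TSimp (n+1), TSimp n × unitInterval) where
  toFun t := (map k.predAbove t, stdSimplexHomeomorphUnitInterval (map (prismTime k) t))
  continuous_toFun := (continuous_map _).prodMk
    (stdSimplexHomeomorphUnitInterval.continuous.comp (continuous_map _))

lemma prismMap_faceMap (n : ℕ) (k : Fin (n+1)) (j : Fin (n+2)) (t : TSimp n) :
    prismMap n k (faceMap n j t) = (map (k.predAbove ∘ j.succAbove) t,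
      stdSimplexHomeomorphUnitInterval (map (prismTime k ∘ j.succAbove) t)) := by
  simp only [prismMap, ContinuousMap.coe_mk, faceMap_apply, map_comp_apply]

lemma prismMap_zero_faceMap_zero (n : ℕ) (t : TSimp n) :
    prismMap n 0 (faceMap n 0 t) = (t, 1) := by
  have hproj : (0 : Fin (n+1)).predAbove ∘ (0 : Fin (n+2)).succAbove = id := by
    funext i; simp
  have htime : prismTime (0 : Fin (n+1)) ∘ (0 : Fin (n+2)).succAbove = fun _ => 1 := by
    funext i; simp [prismTime]
  rw [prismMap_faceMap, hproj, htime, stdSimplex.map_const, map_id_apply]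
  rfl

lemma prismMap_last_faceMap_last (n : ℕ) (t : TSimp n) :
    prismMap n (Fin.last n) (faceMap n (Fin.last (n+1)) t) = (t, 0) := by
  have hproj : (Fin.last n).predAbove ∘ (Fin.last (n+1)).succAbove = id := by
    funext i; simp
  have htime : prismTime (Fin.last n) ∘ (Fin.last (n+1)).succAbove = fun _ => 0 := by
    funext i; simpa [prismTime] using i.is_le
  rw [prismMap_faceMap, hproj, htime, stdSimplex.map_const, map_id_apply]
  rfl

lemma prismMap_castSucc_faceMap_eq_succ (n : ℕ) (k : Fin n) (t : TSimp n) :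
    prismMap n k.castSucc (faceMap n k.succ.castSucc t) =
      prismMap n k.succ (faceMap n k.succ.castSucc t) := by
  have hproj : k.castSucc.predAbove ∘ k.succ.castSucc.succAbove =
      k.succ.predAbove ∘ k.succ.castSucc.succAbove := by
    funext i; ext
    simp only [Function.comp_apply, Fin.val_succAbove, Fin.val_predAbove, Fin.val_castSucc,
      Fin.val_succ]
    split_ifs <;> omega
  have htime : prismTime k.castSucc ∘ k.succ.castSucc.succAbove =
      prismTime k.succ ∘ k.succ.castSucc.succAbove := by
    funext i
    simp only [prismTime, Function.comp_apply, Fin.val_succAbove, Fin.val_castSucc, Fin.val_succ]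
    split_ifs <;> first | rfl | omega
  rw [prismMap_faceMap, prismMap_faceMap, hproj, htime]

lemma prismMap_succ_faceMap_castSucc {r : ℕ} (k : Fin (r+1)) (j : Fin (r+2)) (h : (j : ℕ) ≤ k)
    (t : TSimp (r+1)) :
    prismMap (r+1) k.succ (faceMap (r+1) j.castSucc t) =
      (faceMap r j (prismMap r k t).1, (prismMap r k t).2) := by
  have hproj : k.succ.predAbove ∘ j.castSucc.succAbove = j.succAbove ∘ k.predAbove := by
    funext i; ext
    simp only [Function.comp_apply, Fin.val_succAbove, Fin.val_predAbove, Fin.val_castSucc,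
      Fin.val_succ]
    split_ifs <;> omega
  have htime : prismTime k.succ ∘ j.castSucc.succAbove = prismTime k := by
    funext i
    simp only [prismTime, Function.comp_apply, Fin.val_succAbove, Fin.val_castSucc, Fin.val_succ]
    split_ifs <;> first | rfl | omega
  rw [prismMap_faceMap, hproj, htime, faceMap_apply, ← map_comp_apply]
  rfl

lemma prismMap_castSucc_faceMap_succ {r : ℕ} (k : Fin (r+1)) (j : Fin (r+2)) (h : (k : ℕ) < j)
    (t : TSimp (r+1)) :
    prismMap (r+1) k.castSucc (faceMap (r+1) j.succ t) =
      (faceMap r j (prismMap r k t).1, (prismMap r k t).2) := by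
  have hproj : k.castSucc.predAbove ∘ j.succ.succAbove = j.succAbove ∘ k.predAbove := by
    funext i; ext
    simp only [Function.comp_apply, Fin.val_succAbove, Fin.val_predAbove, Fin.val_castSucc,
      Fin.val_succ]
    split_ifs <;> omega
  have htime : prismTime k.castSucc ∘ j.succ.succAbove = prismTime k := by
    funext i
    simp only [prismTime, Function.comp_apply, Fin.val_succAbove, Fin.val_castSucc, Fin.val_succ]
    split_ifs <;> first | rfl | omega
  rw [prismMap_faceMap, hproj, htime, faceMap_apply, ← map_comp_apply]
  rfl

/-! ### The prism operator on chains -/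

section Chains

variable (G : Type w) [AddCommGroup G]

lemma SimpSystem.bdry_single (S : SimpSystem.{u}) {m : ℕ} (σ : S.Gen (m+1)) (a : G) :
    S.bdry G m (Finsupp.single σ a) =
      ∑ j : Fin (m+2), (-1 : ℤ) ^ (j : ℕ) • Finsupp.single (S.face m j σ) a := by
  simp [SimpSystem.bdry]

lemma SimpSystem.single_mem_suppIn (S : SimpSystem.{u}) {m : ℕ} {P : S.Gen m → Prop}
    {σ : S.Gen m} (h : P σ) (a : G) : Finsupp.single σ a ∈ S.suppIn G P :=
  fun _ hτ => Finset.mem_singleton.mp (Finsupp.support_single_subset hτ) ▸ h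

end Chains

section Prism

variable {X : Type u} {Y : Type v} [TopologicalSpace X] [TopologicalSpace Y]
  (F' : FilteredSpace Y) (φ : C(X × unitInterval, Y)) (G : Type w) [AddCommGroup G]

def canonicalSimplex {n : ℕ} (τ : C(TSimp n, Y)) : PreSimplex Y n := ⟨τ, canonicalBlock F' τ⟩

lemma canonicalBlock_eq_level {n : ℕ} (τ : C(TSimp n, Y)) (j : Fin (n+1)) :
    canonicalBlock F' τ j = F'.level (τ (vertex j)) := by
  rw [← vert_eq_vertex]
  rfl

lemma canonicalSimplex_face {n : ℕ} (τ : C(TSimp (n+1), Y)) (j : Fin (n+2)) :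
    (canonicalSimplex F' τ).face j = canonicalSimplex F' (τ.comp (faceMap n j)) := by
  refine congrArg (PreSimplex.mk _) (funext fun i => ?_)
  simp [canonicalSimplex, canonicalBlock_eq_level, faceMap_apply]

lemma pushChain_single (g : C(X, Y)) {n : ℕ} (σ : PreSimplex X n) (a : G) :
    pushChain F' g G n (Finsupp.single σ a) =
      Finsupp.single (canonicalSimplex F' (g.comp σ.map)) a :=
  Finsupp.mapDomain_single

def prismSimplex {n : ℕ} (θ : C(TSimp n, X)) (k : Fin (n+1)) : C(TSimp (n+1), Y) :=
  φ.comp ((θ.prodMap (ContinuousMap.id unitInterval)).comp (prismMap n k))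

lemma prismSimplex_zero_comp_faceMap_zero {g : C(X, Y)} (hφ1 : ∀ x, φ (x, 1) = g x) {n : ℕ}
    (θ : C(TSimp n, X)) : (prismSimplex φ θ 0).comp (faceMap n 0) = g.comp θ := by
  ext t
  simp [prismSimplex, prismMap_zero_faceMap_zero, hφ1]

lemma prismSimplex_last_comp_faceMap_last {f : C(X, Y)} (hφ0 : ∀ x, φ (x, 0) = f x) {n : ℕ}
    (θ : C(TSimp n, X)) :
    (prismSimplex φ θ (Fin.last n)).comp (faceMap n (Fin.last (n+1))) = f.comp θ := by
  ext t
  simp [prismSimplex, prismMap_last_faceMap_last, hφ0]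

lemma prismSimplex_castSucc_comp_faceMap {n : ℕ} (θ : C(TSimp n, X)) (k : Fin n) :
    (prismSimplex φ θ k.castSucc).comp (faceMap n k.succ.castSucc) =
      (prismSimplex φ θ k.succ).comp (faceMap n k.succ.castSucc) := by
  ext t
  simp only [prismSimplex, ContinuousMap.comp_apply, prismMap_castSucc_faceMap_eq_succ]

lemma prismSimplex_succ_comp_faceMap_castSucc {r : ℕ} (θ : C(TSimp (r+1), X)) (k : Fin (r+1))
    (j : Fin (r+2)) (h : (j : ℕ) ≤ k) :
    (prismSimplex φ θ k.succ).comp (faceMap (r+1) j.castSucc) =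
      prismSimplex φ (θ.comp (faceMap r j)) k := by
  ext t
  simp only [prismSimplex, ContinuousMap.comp_apply, prismMap_succ_faceMap_castSucc k j h]
  rfl

lemma prismSimplex_castSucc_comp_faceMap_succ {r : ℕ} (θ : C(TSimp (r+1), X)) (k : Fin (r+1))
    (j : Fin (r+2)) (h : (k : ℕ) < j) :
    (prismSimplex φ θ k.castSucc).comp (faceMap (r+1) j.succ) =
      prismSimplex φ (θ.comp (faceMap r j)) k := by
  ext t
  simp only [prismSimplex, ContinuousMap.comp_apply, prismMap_castSucc_faceMap_succ k j h]
  rfl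

def prismChain (n : ℕ) : (filtSys X).Chains G n →+ (filtSys Y).Chains G (n+1) :=
  Finsupp.liftAddHom fun σ =>
    ∑ k : Fin (n+1), (-1 : ℤ) ^ (k : ℕ) •
      Finsupp.singleAddHom (canonicalSimplex F' (prismSimplex φ σ.map k))

lemma prismChain_single {n : ℕ} (σ : PreSimplex X n) (a : G) :
    prismChain F' φ G n (Finsupp.single σ a) =
      ∑ k : Fin (n+1), (-1 : ℤ) ^ (k : ℕ) •
        Finsupp.single (canonicalSimplex F' (prismSimplex φ σ.map k)) a := by
  simp [prismChain]

lemma prismChain_mem_suppIn {n : ℕ} {P : PreSimplex Y (n+1) → Prop} {ξ : (filtSys X).Chains G n}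
    (h : ∀ σ ∈ ξ.support, ∀ k, P (canonicalSimplex F' (prismSimplex φ σ.map k))) :
    prismChain F' φ G n ξ ∈ (filtSys Y).suppIn G P := by
  rw [← Finsupp.sum_single ξ, Finsupp.sum, map_sum]
  refine AddSubgroup.sum_mem _ fun σ hσ => ?_
  rw [prismChain_single]
  exact AddSubgroup.sum_mem _ fun k _ =>
    AddSubgroup.zsmul_mem _ (SimpSystem.single_mem_suppIn G _ (h σ hσ k) _) _

/-- The faces of the prism simplices other than the `k`-th and `(k+1)`-st faces of the `k`-th one
(which telescope); `l : Fin n` runs over the faces `k.succ.succAbove (k.succAbove l)`. -/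
def prismOffDiagonal {n : ℕ} (σ : PreSimplex X n) (a : G) : (filtSys Y).Chains G n :=
  ∑ k : Fin (n+1), ∑ l : Fin n,
    (-1 : ℤ) ^ ((k : ℕ) + (k.succ.succAbove (k.succAbove l) : ℕ)) •
      Finsupp.single (canonicalSimplex F'
        ((prismSimplex φ σ.map k).comp (faceMap n (k.succ.succAbove (k.succAbove l))))) a

lemma bdry_prismChain_single {f g : C(X, Y)} (hφ0 : ∀ x, φ (x, 0) = f x)
    (hφ1 : ∀ x, φ (x, 1) = g x) {n : ℕ} (σ : PreSimplex X n) (a : G) :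
    (filtSys Y).bdry G n (prismChain F' φ G n (Finsupp.single σ a)) =
      Finsupp.single (canonicalSimplex F' (g.comp σ.map)) a -
        Finsupp.single (canonicalSimplex F' (f.comp σ.map)) a +
        prismOffDiagonal F' φ G σ a := by
  set c : Fin (n+1) → Fin (n+2) → (filtSys Y).Chains G n := fun k j =>
    Finsupp.single (canonicalSimplex F' ((prismSimplex φ σ.map k).comp (faceMap n j))) a
  have hsplit : ∀ k : Fin (n+1),
      (filtSys Y).bdry G n ((-1 : ℤ) ^ (k : ℕ) •
        Finsupp.single (canonicalSimplex F' (prismSimplex φ σ.map k)) a) =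
      (c k k.castSucc - c k k.succ) + ∑ l : Fin n,
        (-1 : ℤ) ^ ((k : ℕ) + (k.succ.succAbove (k.succAbove l) : ℕ)) •
          c k (k.succ.succAbove (k.succAbove l)) := by
    intro k
    have hodd : (-1 : ℤ) ^ ((k : ℕ) + (k.succ : ℕ)) = -1 :=
      Odd.neg_one_pow ⟨k, by rw [Fin.val_succ]; ring⟩
    have heven : (-1 : ℤ) ^ ((k : ℕ) + (k.castSucc : ℕ)) = 1 :=
      Even.neg_one_pow ⟨k, by rw [Fin.val_castSucc]⟩
    rw [map_zsmul, SimpSystem.bdry_single, Finset.smul_sum, Fin.sum_univ_succAbove _ k.succ,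
      Fin.sum_univ_succAbove _ k, Fin.succAbove_succ_self]
    simp only [smul_smul, ← pow_add, hodd, heven, neg_smul, one_smul, canonicalSimplex_face]
    abel
  rw [prismChain_single, map_sum, Finset.sum_congr rfl fun k _ => hsplit k,
    Finset.sum_add_distrib, Fin.sum_sub_telescope]
  · simp only [c, Fin.castSucc_zero, Fin.succ_last,
      prismSimplex_zero_comp_faceMap_zero φ hφ1, prismSimplex_last_comp_faceMap_last φ hφ0]
    rfl
  · intro i
    simp only [c, Fin.succ_castSucc, prismSimplex_castSucc_comp_faceMap]

/-- `(j, k) ↦ (k', l)` such that the `k`-th prism simplex over the `j`-th face of an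
`(r+1)`-simplex is the face `k'.succ.succAbove (k'.succAbove l)` of the `k'`-th prism simplex
over the simplex itself. -/
def prismFaceEquiv (r : ℕ) : Fin (r+2) × Fin (r+1) ≃ Fin (r+2) × Fin (r+1) where
  toFun x := if h : (x.1 : ℕ) ≤ x.2 then (x.2.succ, ⟨x.1, by omega⟩)
    else (x.2.castSucc, ⟨x.1 - 1, by omega⟩)
  invFun y := if h : (y.2 : ℕ) < y.1 then (⟨y.2, by omega⟩, ⟨y.1 - 1, by omega⟩)
    else (⟨y.2 + 1, by omega⟩, ⟨y.1, by omega⟩)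
  left_inv x := by
    ext <;> dsimp only <;> split_ifs <;> dsimp only at * <;>
      simp only [Fin.val_succ, Fin.val_castSucc] at * <;> omega
  right_inv y := by
    ext <;> dsimp only <;> split_ifs <;> dsimp only at * <;>
      simp only [Fin.val_succ, Fin.val_castSucc] at * <;> omega

lemma prismOffDiagonal_eq {r : ℕ} (σ : PreSimplex X (r+1)) (a : G) :
    prismOffDiagonal F' φ G σ a =
      -prismChain F' φ G r ((filtSys X).bdry G r (Finsupp.single σ a)) := by
  have hface : ∀ j : Fin (r+2),
      prismChain F' φ G r ((-1 : ℤ) ^ (j : ℕ) • Finsupp.single ((filtSys X).face r j σ) a) =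
        ∑ k : Fin (r+1), (-1 : ℤ) ^ ((j : ℕ) + k) • Finsupp.single
          (canonicalSimplex F' (prismSimplex φ (σ.map.comp (faceMap r j)) k)) a := by
    intro j
    rw [map_zsmul, prismChain_single, Finset.smul_sum]
    simp only [smul_smul, ← pow_add]
    rfl
  rw [SimpSystem.bdry_single, map_sum, Finset.sum_congr rfl fun j _ => hface j]
  simp only [← Finset.sum_neg_distrib, prismOffDiagonal]
  rw [← Finset.sum_product', ← Finset.sum_product', Finset.univ_product_univ]
  refine (Fintype.sum_equiv (prismFaceEquiv r) _ _ fun x => ?_).symm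
  obtain ⟨j, k⟩ := x
  by_cases h : (j : ℕ) ≤ k
  · have he : prismFaceEquiv r (j, k) = (k.succ, ⟨j, by omega⟩) := dif_pos h
    have hj : k.succ.succ.succAbove (k.succ.succAbove ⟨j, by omega⟩) = j.castSucc := by
      ext; simp only [Fin.val_succAbove, Fin.val_succ, Fin.val_castSucc]; split_ifs <;> omega
    have hsign : (-1 : ℤ) ^ ((k.succ : ℕ) + (j.castSucc : ℕ)) = -(-1) ^ ((j : ℕ) + k) := by
      rw [Fin.val_succ, Fin.val_castSucc, pow_add, pow_add, pow_succ]; ring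
    rw [he, hj, hsign, prismSimplex_succ_comp_faceMap_castSucc φ σ.map k j h, neg_smul]
  · have he : prismFaceEquiv r (j, k) = (k.castSucc, ⟨j - 1, by omega⟩) := dif_neg h
    have hj : k.castSucc.succ.succAbove (k.castSucc.succAbove ⟨j - 1, by omega⟩) = j.succ := by
      ext; simp only [Fin.val_succAbove, Fin.val_succ, Fin.val_castSucc]; split_ifs <;> omega
    have hsign : (-1 : ℤ) ^ ((k.castSucc : ℕ) + (j.succ : ℕ)) = -(-1) ^ ((j : ℕ) + k) := by
      rw [Fin.val_succ, Fin.val_castSucc, pow_add, pow_add, pow_succ]; ring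
    rw [he, hj, hsign, prismSimplex_castSucc_comp_faceMap_succ φ σ.map k j (by omega), neg_smul]

lemma bdry_prismChain_of_bdry_eq_zero {f g : C(X, Y)} (hφ0 : ∀ x, φ (x, 0) = f x)
    (hφ1 : ∀ x, φ (x, 1) = g x) {n : ℕ} {ξ : (filtSys X).Chains G n}
    (hξ : (filtSys X).bdryFrom G n ξ = 0) :
    (filtSys Y).bdryFrom G (n+1) (prismChain F' φ G n ξ) =
      pushChain F' g G n ξ - pushChain F' f G n ξ := by
  change (filtSys Y).bdry G n (prismChain F' φ G n ξ) = _
  cases n with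
  | zero =>
    have hhom : ((filtSys Y).bdry G 0).comp (prismChain F' φ G 0) =
        pushChain F' g G 0 - pushChain F' f G 0 :=
      Finsupp.addHom_ext fun σ a => by
        rw [AddMonoidHom.comp_apply, bdry_prismChain_single F' φ G hφ0 hφ1,
          AddMonoidHom.sub_apply, pushChain_single, pushChain_single]
        simp [prismOffDiagonal]
    exact DFunLike.congr_fun hhom ξ
  | succ r =>
    have hhom : ((filtSys Y).bdry G (r+1)).comp (prismChain F' φ G (r+1)) =
        pushChain F' g G (r+1) - pushChain F' f G (r+1) -
          (prismChain F' φ G r).comp ((filtSys X).bdry G r) :=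
      Finsupp.addHom_ext fun σ a => by
        rw [AddMonoidHom.comp_apply, bdry_prismChain_single F' φ G hφ0 hφ1, prismOffDiagonal_eq,
          AddMonoidHom.sub_apply, AddMonoidHom.sub_apply, pushChain_single, pushChain_single]
        abel
    have hξ' : (filtSys X).bdry G r ξ = 0 := hξ
    simpa [hξ'] using DFunLike.congr_fun hhom ξ

end Prism

/-! ### Allowability of the prism simplices -/

section Allowable

variable {X : Type u} {Y : Type v} [TopologicalSpace X] [TopologicalSpace Y]
  {F : FilteredSpace X} {F' : FilteredSpace Y} {p : Set X → ℤ} {q : Set Y → ℤ}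
  {φ : C(X × unitInterval, Y)} {m : ℕ} {σ : PreSimplex X m}

variable (F') in
lemma canonicalSimplex_isFiltered {n : ℕ} {τ : C(TSimp n, Y)} {β : Fin (n+1) → ℤ}
    (hβ : Monotone β)
    (hτ : ∀ t t', supportSup β t ≤ supportSup β t' → F'.level (τ t) ≤ F'.level (τ t')) :
    (canonicalSimplex F' τ).IsFiltered F' := by
  have hvertex : ∀ {t} {j : Fin (n+1)}, t j ≠ 0 →
      F'.level (τ (vertex j)) ≤ F'.level (τ t) := fun hj =>
    hτ _ _ ((supportSup_vertex _).trans_le (le_supportSup hj))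
  refine ⟨fun j j' hjj' => ?_, fun i => ?_⟩
  · simp only [canonicalSimplex, canonicalBlock_eq_level]
    exact hτ _ _ (by simpa only [supportSup_vertex] using hβ hjj')
  · ext t
    simp only [canonicalSimplex, canonicalBlock_eq_level, mem_preimage,
      FilteredSpace.mem_filt_iff_level_le, mem_ofPred_eq]
    refine ⟨fun ht j hj => (hvertex hj).trans ht, fun ht => ?_⟩
    obtain ⟨j, hj, hmax⟩ := exists_supportSup_eq (β := β) t
    exact (hτ _ _ (hmax.trans (supportSup_vertex j).symm).le).trans (ht j hj)

lemma PreSimplex.IsFiltered.canonicalSimplex_prismSimplex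
    (hφ : (F.prodRight unitInterval).IsStratifiedMap F' φ) (hσ : σ.IsFiltered F)
    (k : Fin (m+1)) : (canonicalSimplex F' (prismSimplex φ σ.map k)).IsFiltered F' :=
  canonicalSimplex_isFiltered F' (hσ.1.comp (Fin.predAbove_right_monotone k)) fun t t' h => by
    rw [← supportSup_map, ← supportSup_map] at h
    exact hσ.level_homotopy_le hφ h _ _

lemma PreSimplex.Admissible.canonicalSimplex_prismSimplex (hp : F.IsPerversity p)
    (hq : F'.IsPerversity q) (hφ : (F.prodRight unitInterval).IsStratifiedMap F' φ)
    (hφp : ∀ T T', (F.prodRight unitInterval).IsStratum T → F'.IsStratum T' → φ '' T ⊆ T' →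
      F'.dualPerv q T' ≤ (F.prodRight unitInterval).dualPerv (pervProdRight p) T)
    (hσ : σ.Admissible F p) (k : Fin (m+1)) :
    (canonicalSimplex F' (prismSimplex φ σ.map k)).Admissible F' q := by
  intro T hT t ht
  set s := stdSimplex.map k.predAbove t
  have hS := FilteredSpace.isStratumDim_connectedComponentIn_level (F := F) (σ.map s)
  have hsS := mem_connectedComponentIn (FilteredSpace.level_mem (F := F) (σ.map s))
  have hSI := hS.prod_univ (M := unitInterval)
  obtain ⟨T', hT', hφT', hcodim⟩ := hφ.2 _ ⟨_, hSI⟩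
  obtain rfl : T = T' := hT.eq_of_mem hT' ht (hφT' ⟨_, ⟨hsS, trivial⟩, rfl⟩)
  have hD := hφp _ T ⟨_, hSI⟩ hT hφT'
  rw [hS.dualPerv_prod_univ] at hD
  rw [hS.codim_prod_univ] at hcodim
  have hperv := FilteredSpace.codim_sub_perv_le_of_dualPerv_le hp hq hT hcodim hD
  have hadm := hσ _ ⟨_, hS⟩ s hsS
  have hcard : suppCard t ≤ suppCard s + 1 := suppCard_le_suppCard_map_predAbove k t
  push_cast
  omega

end Allowable

theorem stratified_homotopy_invariance_general
    {X : Type u} {Y : Type v} [TopologicalSpace X] [TopologicalSpace Y]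
    (F : FilteredSpace X) (F' : FilteredSpace Y)
    (p : Set X → ℤ) (q : Set Y → ℤ) (hp : F.IsPerversity p) (hq : F'.IsPerversity q)
    (f g : C(X, Y))
    (φ : C(X × ↥unitInterval, Y))
    (hφ : FilteredSpace.IsStratifiedMap (FilteredSpace.prodRight ↥unitInterval F) F' ⇑φ)
    (hφ0 : ∀ x, φ (x, 0) = f x) (hφ1 : ∀ x, φ (x, 1) = g x)
    (hφp : ∀ T T', (FilteredSpace.prodRight ↥unitInterval F).IsStratum T →
      F'.IsStratum T' → ⇑φ '' T ⊆ T' →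
      F'.dualPerv q T' ≤
        (FilteredSpace.prodRight ↥unitInterval F).dualPerv (pervProdRight p) T)
    (G : Type w) [AddCommGroup G] :
    ∀ (m : ℕ) (ξ : (filtSys X).Chains G m),
      ξ ∈ relCycles ((filtSys X).bdryFrom G) (fun k => iChains F p G Set.univ k)
        (fun _ => ⊥) m →
      ∀ (hfξ : pushChain F' f G m ξ ∈ relCycles ((filtSys Y).bdryFrom G)
          (fun k => iChains F' q G Set.univ k) (fun _ => ⊥) m)
        (hgξ : pushChain F' g G m ξ ∈ relCycles ((filtSys Y).bdryFrom G)
          (fun k => iChains F' q G Set.univ k) (fun _ => ⊥) m),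
        hcl ((filtSys Y).bdryFrom G) (fun k => iChains F' q G Set.univ k) (fun _ => ⊥)
            (pushChain F' f G m ξ) hfξ =
          hcl ((filtSys Y).bdryFrom G) (fun k => iChains F' q G Set.univ k) (fun _ => ⊥)
            (pushChain F' g G m ξ) hgξ := by
  intro m ξ hξ hfξ hgξ
  have hbdry := bdry_prismChain_of_bdry_eq_zero F' φ G hφ0 hφ1 (AddSubgroup.mem_bot.mp hξ.2)
  have hallowable : prismChain F' φ G m ξ ∈ iChains F' q G univ (m+1) := by
    refine ⟨prismChain_mem_suppIn F' φ G fun σ hσ k => ?_, AddSubgroup.mem_comap.mpr ?_⟩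
    · obtain ⟨hσf, hσa, -⟩ := hξ.1.1 σ hσ
      exact ⟨hσf.canonicalSimplex_prismSimplex hφ k,
        hσa.canonicalSimplex_prismSimplex hp hq hφ hφp k, subset_univ _⟩
    · rw [hbdry]
      exact sub_mem hgξ.1.1 hfξ.1.1
  exact hcl_eq_of_sub_eq_bdry _ _ _ hfξ hgξ hallowable hbdry

theorem stratified_homotopy_invariance
    {X : Type u} {Y : Type v} [TopologicalSpace X] [TopologicalSpace Y]
    [T2Space X] [T2Space Y]
    (F : FilteredSpace X) (F' : FilteredSpace Y)
    (hX : F.IsStratifiedSpace) (hY : F'.IsStratifiedSpace)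
    (p : Set X → ℤ) (q : Set Y → ℤ) (hp : F.IsPerversity p) (hq : F'.IsPerversity q)
    (f g : C(X, Y))
    (hf : FilteredSpace.IsStratifiedMap F F' ⇑f) (hg : FilteredSpace.IsStratifiedMap F F' ⇑g)
    (φ : C(X × ↥unitInterval, Y))
    (hφ : FilteredSpace.IsStratifiedMap (FilteredSpace.prodRight ↥unitInterval F) F' ⇑φ)
    (hφ0 : ∀ x, φ (x, 0) = f x) (hφ1 : ∀ x, φ (x, 1) = g x)
    (hφp : ∀ T T', (FilteredSpace.prodRight ↥unitInterval F).IsStratum T →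
      F'.IsStratum T' → ⇑φ '' T ⊆ T' →
      F'.dualPerv q T' ≤
        (FilteredSpace.prodRight ↥unitInterval F).dualPerv (pervProdRight p) T)
    (G : Type w) [AddCommGroup G] :
    ∀ (m : ℕ) (ξ : (filtSys X).Chains G m),
      ξ ∈ relCycles ((filtSys X).bdryFrom G) (fun k => iChains F p G Set.univ k)
        (fun _ => ⊥) m →
      ∀ (hfξ : pushChain F' f G m ξ ∈ relCycles ((filtSys Y).bdryFrom G)
          (fun k => iChains F' q G Set.univ k) (fun _ => ⊥) m)
        (hgξ : pushChain F' g G m ξ ∈ relCycles ((filtSys Y).bdryFrom G)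
          (fun k => iChains F' q G Set.univ k) (fun _ => ⊥) m),
        hcl ((filtSys Y).bdryFrom G) (fun k => iChains F' q G Set.univ k) (fun _ => ⊥)
            (pushChain F' f G m ξ) hfξ =
          hcl ((filtSys Y).bdryFrom G) (fun k => iChains F' q G Set.univ k) (fun _ => ⊥)
            (pushChain F' g G m ξ) hgξ :=
  stratified_homotopy_invariance_general F F' p q hp hq f g φ hφ hφ0 hφ1 hφp G

end
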